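/- arXiv:2004.06136 — 9 statements merged into one kernel-verified Lean document; each statement's English description precedes it below -/
import Mathlib

section
/- Let (φ, ψ) be an embedding of a probabilistic model (A, A₊, u_A) into a probabilistic model (B, B₊, u_B), and define P := φ ∘ ψ* : B → B and its dual P* = ψ ∘ φ* : B* → B* (under the canonical identifications A** ≅ A, B** ≅ B). Then P² = P, P(B₊) ⊆ B₊, P(u_B) = u_B, and the range of P equals φ(A); likewise (P*)² = P*, P*(B₊*) ⊆ B₊*, and the range of P* equals ψ(A*). -/
open Module

/-- A probabilistic model `(A, A₊, u_A)`: a finite-dimensional real vector space `A`,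
a closed generating pointed convex cone `A₊`, and an order unit `u_A ∈ A₊`. -/
structure ProbModel (V : Type) [NormedAddCommGroup V] [NormedSpace ℝ V]
    [FiniteDimensional ℝ V] where
  pos : Set V
  unit : V
  add_mem : ∀ x ∈ pos, ∀ y ∈ pos, x + y ∈ pos
  smul_mem : ∀ c : ℝ, 0 ≤ c → ∀ x ∈ pos, c • x ∈ pos
  pointed : ∀ x ∈ pos, -x ∈ pos → x = 0
  closed : IsClosed pos
  spanning : Submodule.span ℝ pos = ⊤
  unit_mem : unit ∈ pos
  orderUnit : ∀ v : V, ∃ t : ℝ, 0 ≤ t ∧ t • unit - v ∈ pos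

/-- The dual cone `A₊* = {ω ∈ A* : ω(e) ≥ 0 for all e ∈ A₊}`. -/
def ProbModel.dualPos {V : Type} [NormedAddCommGroup V] [NormedSpace ℝ V]
    [FiniteDimensional ℝ V] (M : ProbModel V) : Set (Dual ℝ V) :=
  {ω | ∀ e ∈ M.pos, 0 ≤ ω e}

/-- An embedding `(φ, ψ)` of a probabilistic model `M` into a probabilistic model `N`. -/
structure ModelEmbedding {V W : Type} [NormedAddCommGroup V] [NormedSpace ℝ V]
    [FiniteDimensional ℝ V] [NormedAddCommGroup W] [NormedSpace ℝ W]
    [FiniteDimensional ℝ W] (M : ProbModel V) (N : ProbModel W) where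
  φ : V →ₗ[ℝ] W
  ψ : Dual ℝ V →ₗ[ℝ] Dual ℝ W
  φ_pos : ∀ a ∈ M.pos, φ a ∈ N.pos
  ψ_pos : ∀ ω ∈ M.dualPos, ψ ω ∈ N.dualPos
  φ_unit : φ M.unit = N.unit
  pairing : ∀ (ω : Dual ℝ V) (e : V), ψ ω (φ e) = ω e


theorem ProbModel.bipolar {V : Type} [NormedAddCommGroup V] [NormedSpace ℝ V]
    [FiniteDimensional ℝ V] (M : ProbModel V) (x : V)
    (hx : ∀ ω ∈ M.dualPos, 0 ≤ ω x) : x ∈ M.pos := by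
  by_contra h
  have hconv : Convex ℝ M.pos := by
    intro a ha b hb s t hs ht hst
    exact M.add_mem _ (M.smul_mem s hs a ha) _ (M.smul_mem t ht b hb)
  obtain ⟨f, u, hfu, hux⟩ := geometric_hahn_banach_closed_point hconv M.closed h
  have h0 : (0 : V) ∈ M.pos := by
    simpa using M.smul_mem 0 le_rfl M.unit M.unit_mem
  have hu0 : 0 < u := by simpa using hfu 0 h0
  have hle : ∀ a ∈ M.pos, f a ≤ 0 := by
    intro a ha
    by_contra hfa
    push_neg at hfa
    have := hfu (((u + 1) / f a) • a) (M.smul_mem _ (by positivity) a ha)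
    rw [map_smul, smul_eq_mul, div_mul_cancel₀ _ (ne_of_gt hfa)] at this
    linarith
  have := hx (-f.toLinearMap) (fun e he => by simpa using hle e he)
  simp only [LinearMap.neg_apply, ContinuousLinearMap.coe_coe] at this
  linarith

/-- For an embedding `(φ, ψ)` of `M` into `N`, with `ψ* : B → A` the
dual map of `ψ` (characterized under the canonical identifications by
`ω(ψ*(b)) = (ψ(ω))(b)`), the map `P := φ ∘ ψ* : B → B` is an idempotent positive unital
projection with range `φ(A)`, and its dual `P* = ψ ∘ φ* : B* → B*` is an idempotent
positive projection with range `ψ(A*)`. -/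
theorem embedding_projection {V W : Type} [NormedAddCommGroup V] [NormedSpace ℝ V]
    [FiniteDimensional ℝ V] [NormedAddCommGroup W] [NormedSpace ℝ W]
    [FiniteDimensional ℝ W] (M : ProbModel V) (N : ProbModel W)
    (E : ModelEmbedding M N)
    (ψstar : W →ₗ[ℝ] V)
    (hψstar : ∀ (ω : Dual ℝ V) (b : W), ω (ψstar b) = E.ψ ω b) :
    (E.φ ∘ₗ ψstar) ∘ₗ (E.φ ∘ₗ ψstar) = E.φ ∘ₗ ψstar
      ∧ (E.φ ∘ₗ ψstar) '' N.pos ⊆ N.pos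
      ∧ (E.φ ∘ₗ ψstar) N.unit = N.unit
      ∧ Set.range (E.φ ∘ₗ ψstar) = Set.range E.φ
      ∧ (E.ψ ∘ₗ E.φ.dualMap) ∘ₗ (E.ψ ∘ₗ E.φ.dualMap) = E.ψ ∘ₗ E.φ.dualMap
      ∧ (E.ψ ∘ₗ E.φ.dualMap) '' N.dualPos ⊆ N.dualPos
      ∧ Set.range (E.ψ ∘ₗ E.φ.dualMap) = Set.range E.ψ := by
  have hretr : ∀ a : V, ψstar (E.φ a) = a := by
    intro a
    have h : ∀ ω : Dual ℝ V, ω (ψstar (E.φ a) - a) = 0 := by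
      intro ω
      rw [map_sub, hψstar, E.pairing, sub_self]
    exact sub_eq_zero.mp ((Module.forall_dual_apply_eq_zero_iff ℝ _).mp h)
  have hretr' : ∀ ω : Dual ℝ V, E.φ.dualMap (E.ψ ω) = ω := by
    intro ω
    ext e
    exact E.pairing ω e
  have hψstar_pos : ∀ b ∈ N.pos, ψstar b ∈ M.pos := by
    intro b hb
    refine M.bipolar _ (fun ω hω => ?_)
    rw [hψstar]
    exact E.ψ_pos ω hω b hb
  refine ⟨?_, ?_, ?_, ?_, ?_, ?_, ?_⟩
  · ext b
    simp [hretr]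
  · rintro _ ⟨b, hb, rfl⟩
    exact E.φ_pos _ (hψstar_pos b hb)
  · have : ψstar N.unit = M.unit := by rw [← E.φ_unit, hretr]
    simp [this, E.φ_unit]
  · apply Set.Subset.antisymm
    · rintro _ ⟨b, rfl⟩
      exact ⟨ψstar b, rfl⟩
    · rintro _ ⟨a, rfl⟩
      exact ⟨E.φ a, by simp [hretr]⟩
  · ext ω
    simp [hretr']
  · rintro _ ⟨η, hη, rfl⟩
    refine E.ψ_pos _ (fun a ha => ?_)
    exact hη _ (E.φ_pos a ha)
  · apply Set.Subset.antisymm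
    · rintro _ ⟨η, rfl⟩
      exact ⟨E.φ.dualMap η, rfl⟩
    · rintro _ ⟨ω, rfl⟩
      exact ⟨E.ψ ω, by simp [hretr']⟩
end

section
/- Let (φ, ψ) be an embedding of a probabilistic model (A, A₊, u_A) into a probabilistic model (B, B₊, u_B), and let P := φ ∘ ψ* : B → B, where ψ* : B → A is the dual map of ψ under the canonical identifications A** ≅ A, B** ≅ B. Then φ(A₊) = φ(A) ∩ B₊ = P(B₊). -/
open Module

/-- Bipolar: a vector on which all dual-positive functionals are nonnegative is in the cone. -/
theorem ProbModel.mem_pos_of_dual {V : Type} [NormedAddCommGroup V] [NormedSpace ℝ V]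
    [FiniteDimensional ℝ V] (M : ProbModel V) (a : V)
    (h : ∀ ω ∈ M.dualPos, 0 ≤ ω a) : a ∈ M.pos := by
  by_contra ha
  have hconv : Convex ℝ M.pos := by
    intro x hx y hy s t hs ht _
    exact M.add_mem _ (M.smul_mem s hs x hx) _ (M.smul_mem t ht y hy)
  obtain ⟨f, u, hfa, hfb⟩ := geometric_hahn_banach_point_closed hconv M.closed ha
  have h0 : (0 : V) ∈ M.pos := by
    simpa using M.smul_mem 0 le_rfl M.unit M.unit_mem
  have hu0 : u < 0 := by simpa using hfb 0 h0
  have hfpos : ∀ b ∈ M.pos, 0 ≤ f b := by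
    intro b hb
    by_contra hfb'
    push_neg at hfb'
    obtain ⟨t, ht, htu⟩ : ∃ t : ℝ, 0 ≤ t ∧ t * f b < u := by
      refine ⟨(u - 1) / f b, ?_, ?_⟩
      · exact le_div_iff_of_neg hfb' |>.mpr (by simp; linarith) |>.trans_eq rfl
      · rw [div_mul_cancel₀ _ hfb'.ne]; linarith
    have := hfb (t • b) (M.smul_mem t ht b hb)
    simp only [map_smul, smul_eq_mul] at this
    linarith
  have := h (f : V →ₗ[ℝ] ℝ) hfpos
  simp only [ContinuousLinearMap.coe_coe] at this
  linarith
/-- For an embedding `(φ, ψ)` of `M` into `N`, with `ψ* : B → A` the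
dual map of `ψ` (characterized under the canonical identifications by
`ω(ψ*(b)) = (ψ(ω))(b)`) and `P := φ ∘ ψ*`, one has `φ(A₊) = φ(A) ∩ B₊ = P(B₊)`. -/
theorem embedding_cone_image {V W : Type} [NormedAddCommGroup V] [NormedSpace ℝ V]
    [FiniteDimensional ℝ V] [NormedAddCommGroup W] [NormedSpace ℝ W]
    [FiniteDimensional ℝ W] (M : ProbModel V) (N : ProbModel W)
    (E : ModelEmbedding M N)
    (ψstar : W →ₗ[ℝ] V)
    (hψstar : ∀ (ω : Dual ℝ V) (b : W), ω (ψstar b) = E.ψ ω b) :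
    E.φ '' M.pos = Set.range E.φ ∩ N.pos
      ∧ E.φ '' M.pos = (E.φ ∘ₗ ψstar) '' N.pos := by
  -- key: if φ a ∈ N.pos then a ∈ M.pos
  have key : ∀ a : V, E.φ a ∈ N.pos → a ∈ M.pos := by
    intro a hb
    apply M.mem_pos_of_dual
    intro ω hω
    have := E.ψ_pos ω hω (E.φ a) hb
    rwa [E.pairing ω a] at this
  have hstar_fix : ∀ a : V, ψstar (E.φ a) = a := by
    intro a
    rw [← sub_eq_zero, ← forall_dual_apply_eq_zero_iff ℝ]
    intro ω
    simp [hψstar ω (E.φ a), E.pairing ω a]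
  have hstar_pos : ∀ b ∈ N.pos, ψstar b ∈ M.pos := by
    intro b hb
    apply M.mem_pos_of_dual
    intro ω hω
    rw [hψstar ω b]
    exact E.ψ_pos ω hω b hb
  constructor
  · ext b
    constructor
    · rintro ⟨a, ha, rfl⟩
      exact ⟨⟨a, rfl⟩, E.φ_pos a ha⟩
    · rintro ⟨⟨a, rfl⟩, hb⟩
      exact ⟨a, key a hb, rfl⟩
  · ext c
    constructor
    · rintro ⟨a, ha, rfl⟩
      exact ⟨E.φ a, E.φ_pos a ha, by simp [hstar_fix a]⟩
    · rintro ⟨b, hb, rfl⟩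
      exact ⟨ψstar b, hstar_pos b hb, rfl⟩
end

section
/- (Kadison's inequality) Let Φ be a real-linear map on the real vector space of n×n complex Hermitian matrices that is positive (Φ maps positive-semidefinite matrices to positive-semidefinite matrices) and unital (Φ(I) = I). Then for every Hermitian matrix x, the matrix Φ(x²) − Φ(x)² is positive semidefinite. -/
open scoped ComplexOrder MatrixOrder

/-!
Write a Hermitian `x` as `∑ λᵢ Pᵢ` with its spectral projections `Pᵢ`. Then `Qᵢ = Φ(Pᵢ)` are
positive and sum to `1`, `Φ(x) = ∑ λᵢ Qᵢ` and `Φ(x²) = ∑ λᵢ² Qᵢ`, so the inequality is the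
operator Jensen inequality for the square and a partition of unity by positive elements:
with `a = ∑ λᵢ Qᵢ`, `∑ λᵢ² Qᵢ - a² = ∑ (λᵢ - a) Qᵢ (λᵢ - a) ≥ 0`.
-/

section StarOrderedAlgebra

variable {R ι : Type*} [Ring R] [StarRing R] [PartialOrder R] [StarOrderedRing R]
  [Algebra ℝ R] [StarModule ℝ R]

theorem sum_smul_mul_self_le_sum_sq_smul {s : Finset ι} {Q : ι → R} (hQ : ∀ i ∈ s, 0 ≤ Q i)
    (hsum : ∑ i ∈ s, Q i = 1) (t : ι → ℝ) :
    (∑ i ∈ s, t i • Q i) * (∑ i ∈ s, t i • Q i) ≤ ∑ i ∈ s, t i ^ 2 • Q i := by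
  set a := ∑ i ∈ s, t i • Q i
  have ha : IsSelfAdjoint a :=
    isSelfAdjoint_sum s fun i hi => (IsSelfAdjoint.all (t i)).smul (.of_nonneg (hQ i hi))
  have hexpand : ∀ i, star (t i • 1 - a) * Q i * (t i • 1 - a)
      = t i ^ 2 • Q i - t i • Q i * a - a * t i • Q i + a * Q i * a := by
    intro i
    simp only [star_sub, star_smul, star_one, star_trivial, ha.star_eq, sub_mul, mul_sub,
      smul_mul_assoc, mul_smul_comm, one_mul, mul_one]
    module
  have hdefect : 0 ≤ ∑ i ∈ s, t i ^ 2 • Q i - a * a :=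
    calc (0 : R) ≤ ∑ i ∈ s, star (t i • 1 - a) * Q i * (t i • 1 - a) :=
          Finset.sum_nonneg fun i hi => star_left_conjugate_nonneg (hQ i hi) _
      _ = ∑ i ∈ s, t i ^ 2 • Q i - a * a - a * a + a * (∑ i ∈ s, Q i) * a := by
          simp only [hexpand, Finset.sum_add_distrib, Finset.sum_sub_distrib, ← Finset.sum_mul,
            ← Finset.mul_sum]
          rfl
      _ = ∑ i ∈ s, t i ^ 2 • Q i - a * a := by rw [hsum, mul_one]; abel
  exact sub_nonneg.mp hdefect

end StarOrderedAlgebra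

namespace Matrix.IsHermitian

variable {n 𝕜 : Type*} [Fintype n] [DecidableEq n] [RCLike 𝕜] {x : Matrix n n 𝕜}

theorem exists_nonneg_pow_eq_sum_smul (hx : x.IsHermitian) :
    ∃ P : n → Matrix n n 𝕜, (∀ i, 0 ≤ P i) ∧ ∀ k : ℕ, x ^ k = ∑ i, hx.eigenvalues i ^ k • P i := by
  let U := hx.eigenvectorUnitary
  refine ⟨fun i => Unitary.conjStarAlgAut 𝕜 _ U (single i i 1), fun i => ?_, fun k => ?_⟩
  · dsimp only
    rw [Unitary.conjStarAlgAut_apply]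
    refine star_right_conjugate_nonneg ?_ _
    simpa [star_eq_conjTranspose, single_mul_single_same] using
      star_mul_self_nonneg (single i i (1 : 𝕜))
  · conv_lhs => rw [hx.spectral_theorem]
    rw [← map_pow, diagonal_pow, ← sum_single_eq_diagonal, map_sum]
    refine Finset.sum_congr rfl fun i _ => ?_
    rw [RCLike.real_smul_eq_coe_smul (K := 𝕜), ← map_smul, smul_single, smul_eq_mul, mul_one]
    simp [RCLike.algebraMap_eq_ofReal, U]

theorem map_mul_self_le {B : Type*} [Ring B] [StarRing B] [PartialOrder B] [StarOrderedRing B]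
    [Algebra ℝ B] [StarModule ℝ B] (Φ : Matrix n n 𝕜 →ₗ[ℝ] B) (hpos : ∀ a, 0 ≤ a → 0 ≤ Φ a)
    (hunital : Φ 1 = 1) (hx : x.IsHermitian) : Φ x * Φ x ≤ Φ (x * x) := by
  obtain ⟨P, hP, hpow⟩ := hx.exists_nonneg_pow_eq_sum_smul
  have hΦpow : ∀ k, Φ (x ^ k) = ∑ i, hx.eigenvalues i ^ k • Φ (P i) := by
    simp [hpow, map_sum, map_smul]
  have hsum : ∑ i, Φ (P i) = 1 := by simpa [hunital] using (hΦpow 0).symm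
  have hΦx : Φ x = ∑ i, hx.eigenvalues i • Φ (P i) := by simpa using hΦpow 1
  rw [← sq x, hΦpow 2, hΦx]
  exact sum_smul_mul_self_le_sum_sq_smul (fun i _ => hpos _ (hP i)) hsum _

end Matrix.IsHermitian

theorem kadison_inequality_general (n : ℕ)
    (Φ : Matrix (Fin n) (Fin n) ℂ →ₗ[ℝ] Matrix (Fin n) (Fin n) ℂ)
    (hpos : ∀ x : Matrix (Fin n) (Fin n) ℂ, x.PosSemidef → (Φ x).PosSemidef)
    (hunital : Φ 1 = 1) :
    ∀ x : Matrix (Fin n) (Fin n) ℂ, x.IsHermitian →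
      (Φ (x * x) - Φ x * Φ x).PosSemidef := by
  intro x hx
  have hΦpos : ∀ a, 0 ≤ a → 0 ≤ Φ a := fun a ha =>
    (hpos a (Matrix.nonneg_iff_posSemidef.mp ha)).nonneg
  exact Matrix.le_iff.mp (hx.map_mul_self_le Φ hΦpos hunital)

/-- **Kadison's inequality.** Let `Φ` be a real-linear map on the real
vector space of `n × n` complex Hermitian matrices (here realized as a real-linear map
on all matrices that sends Hermitian matrices to Hermitian matrices) that is positive
(maps positive-semidefinite matrices to positive-semidefinite matrices) and unital
(`Φ(I) = I`).  Then for every Hermitian `x`, the matrix `Φ(x²) − Φ(x)²` is positive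
semidefinite. -/
theorem kadison_inequality (n : ℕ)
    (Φ : Matrix (Fin n) (Fin n) ℂ →ₗ[ℝ] Matrix (Fin n) (Fin n) ℂ)
    (hherm : ∀ x : Matrix (Fin n) (Fin n) ℂ, x.IsHermitian → (Φ x).IsHermitian)
    (hpos : ∀ x : Matrix (Fin n) (Fin n) ℂ, x.PosSemidef → (Φ x).PosSemidef)
    (hunital : Φ 1 = 1) :
    ∀ x : Matrix (Fin n) (Fin n) ℂ, x.IsHermitian →
      (Φ (x * x) - Φ x * Φ x).PosSemidef :=
  kadison_inequality_general n Φ hpos hunital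
end

section
/- Let P be a real-linear map on the real vector space of n×n complex Hermitian matrices that is positive (P maps positive-semidefinite matrices to positive-semidefinite matrices) and unital (P(I) = I), and suppose there exists a positive definite Hermitian matrix ρ such that tr(P(y)ρ) = tr(yρ) for all Hermitian y. Then P(x²) = x² for every Hermitian matrix x with P(x) = x. -/
/-!
Write `x = ∑ λ • E_λ` with the spectral projections `E_λ` of `x`. Since `∑ P(E_λ) = 1` and
`P x = ∑ λ • P(E_λ)`, expanding gives the Kadison–Schwarz identity
`P(x²) - (P x)² = ∑ (λ - P x) P(E_λ) (λ - P x)`, a sum of positive semidefinite matrices.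
For `P x = x` this makes `P(x²) - x²` positive semidefinite, and its trace against `ρ` vanishes
by the invariance of `ρ`. Conjugating by `√ρ`, a positive semidefinite matrix with zero trace
against a positive definite one is zero.
-/

open scoped ComplexOrder MatrixOrder
open Matrix

section SpectralProjection

variable {A : Type*} [Ring A] [StarRing A] [TopologicalSpace A] [Algebra ℝ A]
  [ContinuousFunctionalCalculus ℝ A IsSelfAdjoint]

noncomputable def spectralProjection (a : A) (μ : ℝ) : A :=
  cfc (fun t : ℝ => if t = μ then (1 : ℝ) else 0) a

lemma sum_smul_spectralProjection {a : A} (ha : (spectrum ℝ a).Finite) (f : ℝ → ℝ) :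
    ∑ μ ∈ ha.toFinset, f μ • spectralProjection a μ = cfc f a := by
  unfold spectralProjection
  rw [← Finset.sum_congr rfl fun μ _ => cfc_smul (f μ) _ a (ha.continuousOn _),
    ← cfc_sum _ a _ fun μ _ => ha.continuousOn _]
  refine cfc_congr fun t ht => ?_
  simp [Finset.sum_apply, ht]

lemma spectralProjection_nonneg [PartialOrder A] [StarOrderedRing A] (a : A) (μ : ℝ) :
    0 ≤ spectralProjection a μ :=
  cfc_nonneg fun t _ => by split_ifs <;> norm_num

end SpectralProjection

lemma sum_sub_mul_mul_sub_eq {R B ι : Type*} [CommSemiring R] [Ring B] [Algebra R B] (s : Finset ι)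
    (μ : ι → R) (q : ι → B) (y : B) (hq : ∑ i ∈ s, q i = 1) (hy : ∑ i ∈ s, μ i • q i = y) :
    ∑ i ∈ s, (μ i • 1 - y) * q i * (μ i • 1 - y) = ∑ i ∈ s, μ i ^ 2 • q i - y * y := by
  have hterm : ∀ i, (μ i • 1 - y) * q i * (μ i • 1 - y) =
      μ i ^ 2 • q i - y * (μ i • q i) - (μ i • q i) * y + y * q i * y := by
    intro i
    simp only [sub_mul, mul_sub, smul_mul_assoc, mul_smul_comm, one_mul, mul_one, smul_smul, sq,
      smul_sub]
    abel
  simp only [hterm, Finset.sum_add_distrib, Finset.sum_sub_distrib, ← Finset.mul_sum,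
    ← Finset.sum_mul, hq, hy, mul_one]
  abel

section Kadison

variable {A B : Type*} [Ring A] [StarRing A] [TopologicalSpace A] [Algebra ℝ A]
  [ContinuousFunctionalCalculus ℝ A IsSelfAdjoint] [PartialOrder A] [StarOrderedRing A]
  [Ring B] [StarRing B] [PartialOrder B] [StarOrderedRing B] [Algebra ℝ B] [StarModule ℝ B]

lemma LinearMap.map_mul_self_le_of_finite_spectrum (P : A →ₗ[ℝ] B)
    (hP : ∀ a, 0 ≤ a → 0 ≤ P a) (hP₁ : P 1 = 1) {a : A} (ha : IsSelfAdjoint a)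
    (hs : (spectrum ℝ a).Finite) : P a * P a ≤ P (a * a) := by
  set q : ℝ → B := fun μ => P (spectralProjection a μ)
  have hq_nonneg : ∀ μ, 0 ≤ q μ := fun μ => hP _ (spectralProjection_nonneg a μ)
  have hP_cfc : ∀ f : ℝ → ℝ, ∑ μ ∈ hs.toFinset, f μ • q μ = P (cfc f a) := fun f => by
    simp only [q, ← map_smul, ← map_sum, sum_smul_spectralProjection hs]
  have hq_sum : ∑ μ ∈ hs.toFinset, q μ = 1 := by
    simpa only [Pi.one_apply, one_smul, cfc_one ℝ a ha, hP₁] using hP_cfc 1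
  have hPa : ∑ μ ∈ hs.toFinset, μ • q μ = P a := by
    simpa only [cfc_id' ℝ a ha] using hP_cfc fun t => t
  have hPa2 : ∑ μ ∈ hs.toFinset, μ ^ 2 • q μ = P (a * a) := by
    rw [hP_cfc (· ^ 2), cfc_pow_id a 2 ha, sq]
  have hPa_sa : IsSelfAdjoint (P a) := hPa ▸ isSelfAdjoint_sum _ fun μ _ =>
    (IsSelfAdjoint.all μ).smul (IsSelfAdjoint.of_nonneg (hq_nonneg μ))
  rw [← sub_nonneg, ← hPa2, ← sum_sub_mul_mul_sub_eq _ _ _ _ hq_sum hPa]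
  refine Finset.sum_nonneg fun μ _ => ?_
  exact (((IsSelfAdjoint.all μ).smul (IsSelfAdjoint.one B)).sub hPa_sa).conjugate_nonneg
    (hq_nonneg μ)

end Kadison

lemma Matrix.PosSemidef.eq_zero_of_trace_mul_eq_zero {n 𝕜 : Type*} [Fintype n] [DecidableEq n]
    [RCLike 𝕜] {A ρ : Matrix n n 𝕜} (hA : A.PosSemidef) (hρ : ρ.PosDef)
    (h : (A * ρ).trace = 0) : A = 0 := by
  set R := CFC.sqrt ρ
  have hRR : R * R = ρ := CFC.sqrt_mul_sqrt_self ρ hρ.posSemidef.nonneg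
  have hR : Rᴴ = R := (CFC.sqrt_nonneg ρ).posSemidef.isHermitian
  have hRu : IsUnit R := isUnit_of_mul_isUnit_left (hRR ▸ hρ.isUnit)
  have hRAR : (R * A * R).PosSemidef := by
    simpa only [hR] using hA.conjTranspose_mul_mul_same R
  have htr : (R * A * R).trace = 0 := by rw [trace_mul_cycle, hRR, trace_mul_comm, h]
  rwa [hRAR.trace_eq_zero_iff, hRu.mul_left_eq_zero, hRu.mul_right_eq_zero] at htr

theorem fixed_point_square_general (n : ℕ)
    (P : Matrix (Fin n) (Fin n) ℂ →ₗ[ℝ] Matrix (Fin n) (Fin n) ℂ)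
    (hpos : ∀ x : Matrix (Fin n) (Fin n) ℂ, x.PosSemidef → (P x).PosSemidef)
    (hunital : P 1 = 1)
    (ρ : Matrix (Fin n) (Fin n) ℂ) (hρ : ρ.PosDef)
    (htr : ∀ y : Matrix (Fin n) (Fin n) ℂ, y.IsHermitian →
      (P y * ρ).trace = (y * ρ).trace) :
    ∀ x : Matrix (Fin n) (Fin n) ℂ, x.IsHermitian → P x = x → P (x * x) = x * x := by
  intro x hx hfix
  have hkadison : x * x ≤ P (x * x) := by
    simpa only [hfix] using P.map_mul_self_le_of_finite_spectrum
      (fun a ha => (hpos a (nonneg_iff_posSemidef.mp ha)).nonneg) hunital hx x.finite_real_spectrum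
  have hx2 : (x * x).IsHermitian := by
    simpa only [hx.eq] using isHermitian_mul_conjTranspose_self x
  have htr0 : ((P (x * x) - x * x) * ρ).trace = 0 := by
    rw [sub_mul, trace_sub, htr _ hx2, sub_self]
  exact sub_eq_zero.mp (Matrix.le_iff.mp hkadison |>.eq_zero_of_trace_mul_eq_zero hρ htr0)

/-- Let `P` be a real-linear map on the real vector space of `n × n`
complex Hermitian matrices (realized as a real-linear map on all matrices sending
Hermitian matrices to Hermitian matrices) that is positive and unital, and suppose
there is a positive definite Hermitian matrix `ρ` with `tr(P(y)ρ) = tr(yρ)` for all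
Hermitian `y`.  Then `P(x²) = x²` for every Hermitian `x` with `P(x) = x`. -/
theorem fixed_point_square (n : ℕ)
    (P : Matrix (Fin n) (Fin n) ℂ →ₗ[ℝ] Matrix (Fin n) (Fin n) ℂ)
    (hherm : ∀ x : Matrix (Fin n) (Fin n) ℂ, x.IsHermitian → (P x).IsHermitian)
    (hpos : ∀ x : Matrix (Fin n) (Fin n) ℂ, x.PosSemidef → (P x).PosSemidef)
    (hunital : P 1 = 1)
    (ρ : Matrix (Fin n) (Fin n) ℂ) (hρ : ρ.PosDef)
    (htr : ∀ y : Matrix (Fin n) (Fin n) ℂ, y.IsHermitian →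
      (P y * ρ).trace = (y * ρ).trace) :
    ∀ x : Matrix (Fin n) (Fin n) ℂ, x.IsHermitian → P x = x → P (x * x) = x * x :=
  fixed_point_square_general n P hpos hunital ρ hρ htr
end

section
/- Let P be a real-linear map on the real vector space of n×n complex Hermitian matrices that is positive (P maps positive-semidefinite matrices to positive-semidefinite matrices), unital (P(I) = I), and idempotent (P² = P), and suppose there exists a positive definite Hermitian matrix ρ such that tr(P(y)ρ) = tr(yρ) for all Hermitian y. Then P(x∘y) = P(x)∘P(y) for every Hermitian x with P(x) = x and every Hermitian y, where x∘y := ½(xy + yx). In particular, the range of P is closed under the Jordan product ∘. -/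
open scoped ComplexOrder

/-- The Jordan product `x ∘ y := ½(xy + yx)` of matrices. -/
noncomputable def jordan {n : ℕ} (x y : Matrix (Fin n) (Fin n) ℂ) :
    Matrix (Fin n) (Fin n) ℂ :=
  (1 / 2 : ℂ) • (x * y + y * x)

/-!
A positive unital map satisfies the Kadison–Schwarz inequality `P(z)² ≤ P(z²)` for Hermitian `z`:
writing `z = ∑ λᵢ eᵢ` spectrally, `P(z²) - P(z)²` is the "variance" `∑ (λᵢ - P z) P(eᵢ) (λᵢ - P z)`
of the positive weights `P(eᵢ)`, which sum to `1`. For `x` fixed by `P`, the positive matrix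
`P(x²) - x²` has vanishing trace against the positive definite `ρ`, so `P(x²) = x²`. The
inequality at `z = x + t y` then reads `t A + t² E ≥ 0` for all real `t`, with
`A = P(xy + yx) - (x P(y) + P(y) x)`, and this forces `A = 0`.
-/

open Matrix
open scoped MatrixOrder

lemma LinearMap.map_mul_self_add_smul_sub {R A : Type*} [CommRing R] [Ring A] [Algebra R A]
    (P : A →ₗ[R] A) {x : A} (hfix : P x = x) (hsq : P (x * x) = x * x) (y : A) (t : R) :
    P ((x + t • y) * (x + t • y)) - P (x + t • y) * P (x + t • y) =
      t • (P (x * y + y * x) - (x * P y + P y * x)) + t ^ 2 • (P (y * y) - P y * P y) := by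
  have hexp : (x + t • y) * (x + t • y) = x * x + t • (x * y + y * x) + t ^ 2 • (y * y) := by
    simp only [add_mul, mul_add, smul_mul_assoc, mul_smul_comm, smul_smul, smul_add]
    module
  simp only [hexp, map_add, map_smul, hsq, hfix, add_mul, mul_add, smul_mul_assoc, mul_smul_comm,
    smul_smul, smul_add, smul_sub]
  module

namespace Matrix

variable {𝕜 : Type*} [RCLike 𝕜] {n : Type*} [Fintype n]

lemma IsHermitian.mul_add_mul {x y : Matrix n n 𝕜} (hx : x.IsHermitian) (hy : y.IsHermitian) :
    (x * y + y * x).IsHermitian := by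
  rw [IsHermitian, conjTranspose_add, conjTranspose_mul, conjTranspose_mul, hx.eq, hy.eq, add_comm]

lemma posSemidef_sum_sq_smul_sub_mul_self [DecidableEq n] {ι : Type*} [Fintype ι]
    {a : ι → Matrix n n 𝕜} (ha : ∀ i, (a i).PosSemidef) (hsum : ∑ i, a i = 1) (c : ι → ℝ) :
    (∑ i, c i ^ 2 • a i - (∑ i, c i • a i) * ∑ i, c i • a i).PosSemidef := by
  set b := ∑ i, c i • a i
  have hb : bᴴ = b :=
    isSelfAdjoint_sum _ fun i _ => (ha i).isHermitian.smul (IsSelfAdjoint.all (c i))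
  have hterm (i : ι) : (c i • 1 - b) * a i * (c i • 1 - b)
      = c i ^ 2 • a i - b * (c i • a i) - (c i • a i) * b + b * a i * b := by
    simp only [sub_mul, mul_sub, smul_mul_assoc, mul_smul_comm, one_mul, mul_one]
    module
  have hvar : ∑ i, (c i • 1 - b) * a i * (c i • 1 - b) = ∑ i, c i ^ 2 • a i - b * b := by
    simp only [hterm, Finset.sum_add_distrib, Finset.sum_sub_distrib, ← Finset.mul_sum,
      ← Finset.sum_mul, hsum, mul_one]
    abel
  rw [← hvar]
  refine posSemidef_sum _ fun i _ => ?_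
  have hself : (c i • 1 - b)ᴴ = c i • 1 - b := by
    rw [conjTranspose_sub, conjTranspose_smul, conjTranspose_one, hb, star_trivial]
  have := (ha i).mul_mul_conjTranspose_same (c i • 1 - b)
  rwa [hself] at this

lemma IsHermitian.exists_sum_smul_posSemidef [DecidableEq n] {z : Matrix n n 𝕜}
    (hz : z.IsHermitian) :
    ∃ (c : n → ℝ) (e : n → Matrix n n 𝕜), (∀ i, (e i).PosSemidef) ∧ ∑ i, e i = 1 ∧
      z = ∑ i, c i • e i ∧ z * z = ∑ i, c i ^ 2 • e i := by
  set φ := Unitary.conjStarAlgAut 𝕜 _ hz.eigenvectorUnitary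
  have hdiag (c : n → ℝ) : φ (diagonal fun i => (c i : 𝕜)) = ∑ i, c i • φ (single i i 1) := by
    simp only [← sum_single_eq_diagonal, map_sum, RCLike.real_smul_eq_coe_smul (K := 𝕜),
      ← map_smul, smul_single, smul_eq_mul, mul_one]
  refine ⟨hz.eigenvalues, fun i => φ (single i i 1), fun i => ?_, ?_, ?_, ?_⟩
  · have hsingle : (single i i (1 : 𝕜)).PosSemidef := by
      rw [← diagonal_single]
      exact .diagonal (Pi.single_nonneg.mpr zero_le_one)
    exact (map_nonneg φ hsingle.nonneg).posSemidef
  · rw [← map_sum, sum_single_one, map_one]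
  · rw [← hdiag]
    exact hz.spectral_theorem
  · rw [← hdiag]
    conv_lhs => rw [hz.spectral_theorem]
    rw [← map_mul, diagonal_mul_diagonal]
    congr 2 with i
    simp [sq]

/-- The Kadison–Schwarz inequality `P(z)² ≤ P(z²)`. -/
theorem posSemidef_map_mul_self_sub_mul_self [DecidableEq n] {m : Type*} [Fintype m]
    [DecidableEq m] (P : Matrix m m 𝕜 →ₗ[ℝ] Matrix n n 𝕜)
    (hpos : ∀ x, x.PosSemidef → (P x).PosSemidef) (hunital : P 1 = 1)
    {z : Matrix m m 𝕜} (hz : z.IsHermitian) :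
    (P (z * z) - P z * P z).PosSemidef := by
  obtain ⟨c, e, he, hsum, hz_eq, hzz_eq⟩ := hz.exists_sum_smul_posSemidef
  rw [hzz_eq, hz_eq]
  simp only [map_sum, map_smul]
  exact posSemidef_sum_sq_smul_sub_mul_self (fun i => hpos _ (he i))
    (by rw [← map_sum, hsum, hunital]) _

lemma PosSemidef.eq_zero_of_trace_mul_posDef_eq_zero [DecidableEq n] {M ρ : Matrix n n 𝕜}
    (hM : M.PosSemidef) (hρ : ρ.PosDef) (h : (M * ρ).trace = 0) : M = 0 := by
  obtain ⟨B, rfl⟩ := CStarAlgebra.nonneg_iff_eq_star_mul_self.mp hM.nonneg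
  rw [star_eq_conjTranspose] at h ⊢
  have hBρB : B * ρ * Bᴴ = 0 :=
    (hρ.posSemidef.mul_mul_conjTranspose_same B).trace_eq_zero_iff.mp <| by
      rwa [trace_mul_cycle]
  suffices Bᴴ = 0 by simp [this]
  refine ext_iff_mulVec.mpr fun v => ?_
  rw [zero_mulVec]
  by_contra hv
  have := hρ.dotProduct_mulVec_pos hv
  simp [star_mulVec, dotProduct_mulVec, vecMul_vecMul, ← Matrix.mul_assoc, hBρB] at this

lemma IsHermitian.eq_zero_of_forall_posSemidef_smul_add_sq_smul {A E : Matrix n n 𝕜}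
    (hA : A.IsHermitian) (h : ∀ t : ℝ, (t • A + t ^ 2 • E).PosSemidef) : A = 0 := by
  have hquad (v : n → 𝕜) : star v ⬝ᵥ A *ᵥ v = 0 := by
    set a := RCLike.re (star v ⬝ᵥ A *ᵥ v)
    set e := RCLike.re (star v ⬝ᵥ E *ᵥ v)
    have hpos (t : ℝ) : 0 ≤ e * (t * t) + a * t + 0 := by
      have := (h t).re_dotProduct_nonneg v
      simp only [add_mulVec, smul_mulVec, dotProduct_add, dotProduct_smul, map_add,
        RCLike.smul_re] at this
      linarith
    have ha : a = 0 := by simpa [discrim] using discrim_le_zero hpos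
    exact RCLike.ext (by simpa using ha) (by simpa using hA.im_star_dotProduct_mulVec_self v)
  have hApsd : A.PosSemidef := posSemidef_iff_dotProduct_mulVec.mpr ⟨hA, fun v => (hquad v).ge⟩
  have hnegApsd : (-A).PosSemidef :=
    posSemidef_iff_dotProduct_mulVec.mpr ⟨hA.neg, fun v => by simp [neg_mulVec, hquad v]⟩
  exact le_antisymm (neg_nonneg.mp hnegApsd.nonneg) hApsd.nonneg

theorem map_mul_self_of_map_eq_self [DecidableEq n] (P : Matrix n n 𝕜 →ₗ[ℝ] Matrix n n 𝕜)
    (hpos : ∀ x, x.PosSemidef → (P x).PosSemidef) (hunital : P 1 = 1)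
    {ρ : Matrix n n 𝕜} (hρ : ρ.PosDef)
    (htr : ∀ y, y.IsHermitian → (P y * ρ).trace = (y * ρ).trace)
    {x : Matrix n n 𝕜} (hx : x.IsHermitian) (hfix : P x = x) : P (x * x) = x * x := by
  have hK := posSemidef_map_mul_self_sub_mul_self P hpos hunital hx
  rw [hfix] at hK
  have hxx : (x * x).IsHermitian := by simpa [hx.eq] using isHermitian_mul_conjTranspose_self x
  refine sub_eq_zero.mp (hK.eq_zero_of_trace_mul_posDef_eq_zero hρ ?_)
  rw [Matrix.sub_mul, trace_sub, htr _ hxx, sub_self]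

theorem map_mul_add_mul_of_map_eq_self [DecidableEq n] (P : Matrix n n 𝕜 →ₗ[ℝ] Matrix n n 𝕜)
    (hpos : ∀ x, x.PosSemidef → (P x).PosSemidef) (hunital : P 1 = 1)
    (hherm : ∀ x, x.IsHermitian → (P x).IsHermitian)
    {x y : Matrix n n 𝕜} (hx : x.IsHermitian) (hy : y.IsHermitian) (hfix : P x = x)
    (hsq : P (x * x) = x * x) : P (x * y + y * x) = x * P y + P y * x := by
  have hA : (P (x * y + y * x) - (x * P y + P y * x)).IsHermitian :=
    (hherm _ (hx.mul_add_mul hy)).sub (hx.mul_add_mul (hherm y hy))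
  refine sub_eq_zero.mp <|
    hA.eq_zero_of_forall_posSemidef_smul_add_sq_smul (E := P (y * y) - P y * P y) fun t => ?_
  rw [← P.map_mul_self_add_smul_sub hfix hsq]
  exact posSemidef_map_mul_self_sub_mul_self P hpos hunital
    (hx.add (hy.smul (IsSelfAdjoint.all t)))

end Matrix

lemma jordan_eq_smul {n : ℕ} (x y : Matrix (Fin n) (Fin n) ℂ) :
    jordan x y = (1 / 2 : ℝ) • (x * y + y * x) := by
  rw [jordan, ← Complex.coe_smul]
  norm_num

lemma Matrix.IsHermitian.jordan {n : ℕ} {x y : Matrix (Fin n) (Fin n) ℂ} (hx : x.IsHermitian)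
    (hy : y.IsHermitian) : (jordan x y).IsHermitian := by
  rw [jordan_eq_smul]
  exact (hx.mul_add_mul hy).smul (IsSelfAdjoint.all _)

/-- Let `P` be a real-linear map on the real vector space of `n × n`
complex Hermitian matrices (realized as a real-linear map on all matrices sending
Hermitian matrices to Hermitian matrices) that is positive, unital and idempotent,
and suppose there is a positive definite Hermitian matrix `ρ` with
`tr(P(y)ρ) = tr(yρ)` for all Hermitian `y`.  Then `P(x∘y) = P(x)∘P(y)` for every
Hermitian `x` with `P(x) = x` and every Hermitian `y`; in particular, the range of `P`
(on Hermitian matrices) is closed under the Jordan product `∘`. -/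
theorem projection_jordan_homomorphism (n : ℕ)
    (P : Matrix (Fin n) (Fin n) ℂ →ₗ[ℝ] Matrix (Fin n) (Fin n) ℂ)
    (hherm : ∀ x : Matrix (Fin n) (Fin n) ℂ, x.IsHermitian → (P x).IsHermitian)
    (hpos : ∀ x : Matrix (Fin n) (Fin n) ℂ, x.PosSemidef → (P x).PosSemidef)
    (hunital : P 1 = 1)
    (hidem : ∀ y : Matrix (Fin n) (Fin n) ℂ, y.IsHermitian → P (P y) = P y)
    (ρ : Matrix (Fin n) (Fin n) ℂ) (hρ : ρ.PosDef)
    (htr : ∀ y : Matrix (Fin n) (Fin n) ℂ, y.IsHermitian →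
      (P y * ρ).trace = (y * ρ).trace) :
    (∀ x y : Matrix (Fin n) (Fin n) ℂ, x.IsHermitian → y.IsHermitian → P x = x →
        P (jordan x y) = jordan (P x) (P y))
      ∧ ∀ a ∈ P '' {x : Matrix (Fin n) (Fin n) ℂ | x.IsHermitian},
          ∀ b ∈ P '' {x : Matrix (Fin n) (Fin n) ℂ | x.IsHermitian},
            jordan a b ∈ P '' {x : Matrix (Fin n) (Fin n) ℂ | x.IsHermitian} := by
  have hmult (x y : Matrix (Fin n) (Fin n) ℂ) (hx : x.IsHermitian) (hy : y.IsHermitian)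
      (hfix : P x = x) : P (jordan x y) = jordan (P x) (P y) := by
    have hsq := map_mul_self_of_map_eq_self P hpos hunital hρ htr hx hfix
    rw [jordan_eq_smul, jordan_eq_smul, map_smul, hfix,
      map_mul_add_mul_of_map_eq_self P hpos hunital hherm hx hy hfix hsq]
  refine ⟨hmult, ?_⟩
  rintro _ ⟨x, hx, rfl⟩ _ ⟨y, hy, rfl⟩
  have hPx : (P x).IsHermitian := hherm x hx
  refine ⟨jordan (P x) y, hPx.jordan hy, ?_⟩
  rw [hmult _ _ hPx hy (hidem x hx), hidem x hx]
end

section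
/- Let (φ, ψ) be a minimal embedding of a probabilistic model (A, A₊, u_A) into the quantum model Q_n, and let P := φ ∘ ψ* (where ψ* is the dual map of ψ under the trace identification). Then the image under P of the cone B₊ of positive-semidefinite n×n matrices equals the set of squares of elements of the range of P: P(B₊) = {x² : x ∈ P(B)}. -/
open Module
open scoped ComplexOrder

/-- An embedding `(φ, ψ)` of a probabilistic model `M` into the `n`-level quantum
model `Q_n`, whose effect space is the real vector space of `n × n` complex Hermitian
matrices with the cone of positive-semidefinite matrices and unit effect `I`; the dual
is identified with the same space via the trace pairing `(ω, e) = tr(ω·e)`. -/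
structure QEmbedding {V : Type} [NormedAddCommGroup V] [NormedSpace ℝ V]
    [FiniteDimensional ℝ V] (M : ProbModel V) (n : ℕ) where
  φ : V →ₗ[ℝ] Matrix (Fin n) (Fin n) ℂ
  ψ : Dual ℝ V →ₗ[ℝ] Matrix (Fin n) (Fin n) ℂ
  φ_herm : ∀ a : V, (φ a).IsHermitian
  ψ_herm : ∀ ω : Dual ℝ V, (ψ ω).IsHermitian
  φ_pos : ∀ a ∈ M.pos, (φ a).PosSemidef
  ψ_pos : ∀ ω ∈ M.dualPos, (ψ ω).PosSemidef
  φ_unit : φ M.unit = 1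
  pairing : ∀ (ω : Dual ℝ V) (e : V), (ψ ω * φ e).trace = (ω e : ℂ)

/-! Write `P := φ ∘ ψ*`. Since `ψ* ∘ φ = id`, the map `P` is idempotent, unital and positive,
and its range on Hermitian matrices is the space `R` of Hermitian fixed points of `P`.
Minimality makes `P` faithful on the positive cone: if `P c = 0` for a nonzero `c ≥ 0`, then every
`ψ ω` annihilates an eigenvector of `c`, and compressing the embedding to the orthogonal
complement of that eigenvector embeds the model into `Q_{n-1}`. For `y ∈ R` the Kadison–Schwarz
inequality gives `P (y²) - y² ≥ 0`, and `P` kills this element, so `P (y²) = y²`. Thus `R` is a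
Jordan algebra; it contains every real polynomial in its elements, in particular the square root
of `P b` for `b ≥ 0`, which is a polynomial in `P b`. Conversely `y² = P (y²)` is positive. -/

open Matrix Polynomial

namespace Matrix

variable {n 𝕜 : Type*} [Fintype n] [RCLike 𝕜]

theorem IsHermitian.posSemidef_mul_self {A : Matrix n n 𝕜} (hA : A.IsHermitian) :
    (A * A).PosSemidef := by
  simpa only [hA.eq] using posSemidef_conjTranspose_mul_self A

variable [DecidableEq n]

section PosSemidef

open scoped MatrixOrder

variable {A B : Matrix n n 𝕜}

theorem PosSemidef.trace_mul_nonneg (hA : A.PosSemidef) (hB : B.PosSemidef) :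
    0 ≤ (A * B).trace := by
  obtain ⟨C, rfl⟩ := CStarAlgebra.nonneg_iff_eq_star_mul_self.mp hA.nonneg
  rw [Matrix.mul_assoc, trace_mul_comm]
  exact (hB.mul_mul_conjTranspose_same C).trace_nonneg

theorem PosSemidef.mul_eq_zero_of_trace_mul_eq_zero (hA : A.PosSemidef) (hB : B.PosSemidef)
    (h : (A * B).trace = 0) : A * B = 0 := by
  obtain ⟨C, rfl⟩ := CStarAlgebra.nonneg_iff_eq_star_mul_self.mp hA.nonneg
  obtain ⟨D, rfl⟩ := CStarAlgebra.nonneg_iff_eq_star_mul_self.mp hB.nonneg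
  have hDC : D * star C = 0 := by
    rw [← trace_conjTranspose_mul_self_eq_zero_iff, ← h, ← trace_mul_cycle, conjTranspose_mul]
    simp only [star_eq_conjTranspose, conjTranspose_conjTranspose, Matrix.mul_assoc]
  calc star C * C * (star D * D) = star C * star (D * star C) * D := by
        simp only [star_mul, star_star, Matrix.mul_assoc]
    _ = 0 := by rw [hDC, star_zero, Matrix.mul_zero, Matrix.zero_mul]

end PosSemidef

theorem diagonal_ofReal_eq_sum_smul_single (d : n → ℝ) :
    diagonal (RCLike.ofReal ∘ d) = ∑ i, d i • single i i (1 : 𝕜) := by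
  ext j k
  rcases eq_or_ne j k with rfl | hjk
  · simp [Matrix.sum_apply, single_apply, RCLike.real_smul_eq_coe_mul]
  · simp [Matrix.sum_apply, single_apply, hjk, Finset.sum_eq_zero]

theorem IsHermitian.exists_posSemidef_cfc_eq_sum {A : Matrix n n 𝕜} (hA : A.IsHermitian) :
    ∃ (t : n → ℝ) (p : n → Matrix n n 𝕜), (∀ i, (p i).PosSemidef) ∧
      ∀ f : ℝ → ℝ, cfc f A = ∑ i, f (t i) • p i := by
  set u : Matrix n n 𝕜 := ↑hA.eigenvectorUnitary
  refine ⟨hA.eigenvalues, fun i => u * single i i 1 * star u, fun i => ?_, fun f => ?_⟩ <;>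
    beta_reduce
  · rw [← diagonal_single]
    exact (PosSemidef.diagonal (Pi.single_nonneg.mpr zero_le_one)).mul_mul_conjTranspose_same _
  · rw [hA.cfc_eq, IsHermitian.cfc, Unitary.conjStarAlgAut_apply,
      diagonal_ofReal_eq_sum_smul_single, Finset.mul_sum, Finset.sum_mul]
    exact Finset.sum_congr rfl fun i _ => by rw [Matrix.mul_smul, Matrix.smul_mul]; rfl

theorem posSemidef_sum_smul_mul_self_sub_mul_self {ι : Type*} [Fintype ι]
    (q : ι → Matrix n n 𝕜) (hq : ∀ i, (q i).PosSemidef) (hsum : ∑ i, q i = 1) (t : ι → ℝ) :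
    (∑ i, (t i * t i) • q i - (∑ i, t i • q i) * ∑ i, t i • q i).PosSemidef := by
  set s := ∑ i, t i • q i
  have hs : sᴴ = s :=
    isSelfAdjoint_sum _ fun i _ => (IsSelfAdjoint.all (t i)).smul (hq i).isHermitian
  have hqs : ∑ i, t i • (q i * s) = s * s := by simp only [← smul_mul_assoc, ← Finset.sum_mul, s]
  have hsq : ∑ i, t i • (s * q i) = s * s := by simp only [← mul_smul_comm, ← Finset.mul_sum, s]
  have hexpand : ∑ i, (t i • 1 - s)ᴴ * q i * (t i • 1 - s) =
      ∑ i, (t i * t i) • q i - s * s := by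
    simp only [conjTranspose_sub, conjTranspose_smul, conjTranspose_one, star_trivial, hs,
      sub_mul, mul_sub, smul_mul_assoc, mul_smul_comm, Matrix.one_mul, Matrix.mul_one,
      Finset.sum_sub_distrib, ← Finset.sum_mul, ← Finset.mul_sum, hsum, smul_sub, smul_smul,
      hqs, hsq]
    abel
  rw [← hexpand]
  exact posSemidef_sum _ fun i _ => (hq i).conjTranspose_mul_mul_same _

theorem IsHermitian.kadison_schwarz {m : Type*} [Fintype m] [DecidableEq m]
    (Φ : Matrix n n 𝕜 →ₗ[ℝ] Matrix m m 𝕜) (hΦ : ∀ b, b.PosSemidef → (Φ b).PosSemidef)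
    (hΦ1 : Φ 1 = 1) {x : Matrix n n 𝕜} (hx : x.IsHermitian) :
    (Φ (x * x) - Φ x * Φ x).PosSemidef := by
  obtain ⟨t, p, hp, hcfc⟩ := hx.exists_posSemidef_cfc_eq_sum
  have hx' : IsSelfAdjoint x := hx
  have h1 : ∑ i, p i = 1 := by simpa using (hcfc 1).symm.trans (cfc_const_one ℝ x)
  have hx1 : x = ∑ i, t i • p i := (cfc_id' ℝ x).symm.trans (hcfc id)
  have hx2 : x * x = ∑ i, (t i * t i) • p i := by
    rw [← hcfc fun t => t * t, cfc_mul _ _ x, cfc_id' ℝ x]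
  rw [hx2, hx1]
  simp only [map_sum, map_smul]
  refine posSemidef_sum_smul_mul_self_sub_mul_self _ (fun i => hΦ _ (hp i)) ?_ _
  rw [← map_sum, h1, hΦ1]

theorem PosSemidef.exists_aeval_mul_self_eq {A : Matrix n n 𝕜} (hA : A.PosSemidef) :
    ∃ q : ℝ[X], aeval A q * aeval A q = A := by
  have hA' : IsSelfAdjoint A := hA.isHermitian
  set q := Lagrange.interpolate A.finite_real_spectrum.toFinset id Real.sqrt
  have hsqrt : cfc Real.sqrt A = aeval A q := by
    rw [← cfc_polynomial q A]
    exact cfc_congr fun x hx => (Lagrange.eval_interpolate_at_node _ (Set.injOn_id _)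
      (A.finite_real_spectrum.mem_toFinset.mpr hx)).symm
  refine ⟨q, ?_⟩
  rw [← hsqrt, ← cfc_mul ..]
  refine (cfc_congr fun x hx => Real.mul_self_sqrt ?_).trans (cfc_id' ℝ A)
  obtain ⟨i, rfl⟩ := hA.isHermitian.spectrum_real_eq_range_eigenvalues ▸ hx
  exact hA.eigenvalues_nonneg i

end Matrix

theorem Matrix.trace_submatrix_succAbove_mul {n : ℕ} {α : Type*} [CommSemiring α]
    {A B : Matrix (Fin (n + 1)) (Fin (n + 1)) α} {i : Fin (n + 1)} (hcol : ∀ j, A j i = 0)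
    (hrow : ∀ j, A i j = 0) :
    (A.submatrix i.succAbove i.succAbove * B.submatrix i.succAbove i.succAbove).trace =
      (A * B).trace := by
  simp [trace, mul_apply, Fin.sum_univ_succAbove _ i, hcol, hrow]

section Jordan

variable {n : ℕ} {S : Submodule ℝ (Matrix (Fin n) (Fin n) ℂ)}

theorem jordan_eq_smul_sub (x y : Matrix (Fin n) (Fin n) ℂ) :
    jordan x y = (2⁻¹ : ℝ) • ((x + y) * (x + y) - x * x - y * y) := by
  rw [jordan, ← Complex.coe_smul]
  push_cast
  congr 1
  · norm_num
  · noncomm_ring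

theorem jordan_self_pow (a : Matrix (Fin n) (Fin n) ℂ) (k : ℕ) :
    jordan a (a ^ k) = a ^ (k + 1) := by
  rw [jordan, ← pow_succ', ← pow_succ, ← two_smul ℂ, smul_smul]
  norm_num

theorem jordan_mem_of_mul_self_mem (hS : ∀ x ∈ S, x * x ∈ S) {x y : Matrix (Fin n) (Fin n) ℂ}
    (hx : x ∈ S) (hy : y ∈ S) : jordan x y ∈ S := by
  rw [jordan_eq_smul_sub]
  exact S.smul_mem _ (S.sub_mem (S.sub_mem (hS _ (S.add_mem hx hy)) (hS x hx)) (hS y hy))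

theorem pow_mem_of_mul_self_mem (h1 : 1 ∈ S) (hS : ∀ x ∈ S, x * x ∈ S)
    {a : Matrix (Fin n) (Fin n) ℂ} (ha : a ∈ S) (k : ℕ) : a ^ k ∈ S := by
  induction k with
  | zero => rwa [pow_zero]
  | succ k ih => rw [← jordan_self_pow]; exact jordan_mem_of_mul_self_mem hS ha ih

theorem aeval_mem_of_mul_self_mem (h1 : 1 ∈ S) (hS : ∀ x ∈ S, x * x ∈ S)
    {a : Matrix (Fin n) (Fin n) ℂ} (ha : a ∈ S) (q : ℝ[X]) : aeval a q ∈ S := by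
  rw [aeval_eq_sum_range]
  exact S.sum_mem fun i _ => S.smul_mem _ (pow_mem_of_mul_self_mem h1 hS ha i)

end Jordan

namespace ProbModel

variable {V : Type} [NormedAddCommGroup V] [NormedSpace ℝ V] [FiniteDimensional ℝ V]
  (M : ProbModel V)

def toProperCone : ProperCone ℝ V where
  carrier := M.pos
  add_mem' ha hb := M.add_mem _ ha _ hb
  zero_mem' := by simpa using M.smul_mem 0 le_rfl _ M.unit_mem
  smul_mem' c _ hx := M.smul_mem c c.2 _ hx
  isClosed' := M.closed

theorem mem_pos_of_forall_dualPos {v : V} (h : ∀ ω ∈ M.dualPos, 0 ≤ ω v) : v ∈ M.pos := by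
  by_contra hv
  obtain ⟨f, hf, hfv⟩ := M.toProperCone.hyperplane_separation_point hv
  exact hfv.not_ge (h f.toLinearMap fun e he => hf e he)

theorem span_dualPos : Submodule.span ℝ M.dualPos = ⊤ := by
  refine Submodule.span_eq_top_of_ne_zero fun v hv => ?_
  by_contra! h
  refine hv (M.pointed v (M.mem_pos_of_forall_dualPos fun ω hω => (h ω hω).ge) ?_)
  exact M.mem_pos_of_forall_dualPos fun ω hω => by rw [map_neg, h ω hω, neg_zero]

end ProbModel

namespace QEmbedding

variable {V : Type} [NormedAddCommGroup V] [NormedSpace ℝ V] [FiniteDimensional ℝ V]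
  {M : ProbModel V} {n : ℕ}

noncomputable def compress (E : QEmbedding M (n + 1)) {u : Matrix (Fin (n + 1)) (Fin (n + 1)) ℂ}
    (hu : u ∈ unitaryGroup (Fin (n + 1)) ℂ) (i : Fin (n + 1))
    (h : ∀ ω j, (uᴴ * E.ψ ω * u) j i = 0) : QEmbedding M n where
  φ :=
    { toFun := fun e => (uᴴ * E.φ e * u).submatrix i.succAbove i.succAbove
      map_add' x y := by simp only [map_add, Matrix.mul_add, Matrix.add_mul]; rfl
      map_smul' r x := by simp only [map_smul, Matrix.mul_smul, Matrix.smul_mul]; rfl }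
  ψ :=
    { toFun := fun ω => (uᴴ * E.ψ ω * u).submatrix i.succAbove i.succAbove
      map_add' x y := by simp only [map_add, Matrix.mul_add, Matrix.add_mul]; rfl
      map_smul' r x := by simp only [map_smul, Matrix.mul_smul, Matrix.smul_mul]; rfl }
  φ_herm a := (isHermitian_conjTranspose_mul_mul _ (E.φ_herm a)).submatrix _
  ψ_herm ω := (isHermitian_conjTranspose_mul_mul _ (E.ψ_herm ω)).submatrix _
  φ_pos a ha := ((E.φ_pos a ha).conjTranspose_mul_mul_same _).submatrix _
  ψ_pos ω hω := ((E.ψ_pos ω hω).conjTranspose_mul_mul_same _).submatrix _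
  φ_unit := by
    change (uᴴ * E.φ M.unit * u).submatrix _ _ = 1
    rw [E.φ_unit, Matrix.mul_one, ← star_eq_conjTranspose, mem_unitaryGroup_iff'.mp hu]
    exact submatrix_one _ Fin.succAbove_right_injective
  pairing ω e := by
    refine (trace_submatrix_succAbove_mul (h ω) fun j => ?_).trans ?_
    · rw [← (isHermitian_conjTranspose_mul_mul _ (E.ψ_herm ω)).apply i j, h ω j, star_zero]
    · have hu' : u * uᴴ = 1 := mem_unitaryGroup_iff.mp hu
      calc (uᴴ * E.ψ ω * u * (uᴴ * E.φ e * u)).trace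
          = (uᴴ * (E.ψ ω * (u * uᴴ) * E.φ e) * u).trace := by simp only [Matrix.mul_assoc]
        _ = (u * uᴴ * (E.ψ ω * (u * uᴴ) * E.φ e)).trace := trace_mul_cycle _ _ _
        _ = ω e := by rw [hu', Matrix.mul_one, Matrix.one_mul, E.pairing]

theorem psi_mul_eq_zero_of_trace_eq_zero (E : QEmbedding M n) {c : Matrix (Fin n) (Fin n) ℂ}
    (hc : c.PosSemidef) (h : ∀ ω, (E.ψ ω * c).trace = 0) (ω : Dual ℝ V) : E.ψ ω * c = 0 := by
  have hω : ω ∈ Submodule.span ℝ M.dualPos := M.span_dualPos ▸ Submodule.mem_top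
  induction hω using Submodule.span_induction with
  | mem ω hω => exact (E.ψ_pos ω hω).mul_eq_zero_of_trace_mul_eq_zero hc (h ω)
  | zero => rw [map_zero, Matrix.zero_mul]
  | add ω ω' _ _ hω hω' => rw [map_add, Matrix.add_mul, hω, hω', add_zero]
  | smul r ω _ hω => rw [map_smul, Matrix.smul_mul, hω, smul_zero]

theorem eq_zero_of_psi_mul_eq_zero (E : QEmbedding M n)
    (hmin : ∀ m < n, IsEmpty (QEmbedding M m)) {c : Matrix (Fin n) (Fin n) ℂ}
    (hc : c.IsHermitian) (h : ∀ ω, E.ψ ω * c = 0) : c = 0 := by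
  by_contra hc0
  obtain ⟨i, hi⟩ := Function.ne_iff.mp (mt hc.eigenvalues_eq_zero_iff.mp hc0)
  cases n with
  | zero => exact i.elim0
  | succ m =>
  set u : Matrix (Fin (m + 1)) (Fin (m + 1)) ℂ := ↑hc.eigenvectorUnitary
  have hu : u ∈ unitaryGroup (Fin (m + 1)) ℂ := hc.eigenvectorUnitary.2
  have hcol : ∀ ω j, (uᴴ * E.ψ ω * u) j i = 0 := by
    intro ω j
    have hdiag : uᴴ * E.ψ ω * u * diagonal (RCLike.ofReal ∘ hc.eigenvalues) = 0 := by
      rw [← hc.conjStarAlgAut_star_eigenvectorUnitary, Unitary.conjStarAlgAut_star_apply]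
      calc uᴴ * E.ψ ω * u * (star u * c * u) = uᴴ * E.ψ ω * (u * star u) * c * u := by
            simp only [Matrix.mul_assoc]
        _ = 0 := by
          rw [mem_unitaryGroup_iff.mp hu, Matrix.mul_one, Matrix.mul_assoc uᴴ, h,
            Matrix.mul_zero, Matrix.zero_mul]
    have hji := congrFun (congrFun hdiag j) i
    rw [mul_diagonal, Matrix.zero_apply] at hji
    exact (mul_eq_zero.mp hji).resolve_right (by simpa using hi)
  exact (hmin m m.lt_succ_self).false (E.compress hu i hcol)

/-- Since `P := φ ∘ ψ*` is idempotent, this is its range `P(B)` on Hermitian matrices. -/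
def hermitianFixedPoints (E : QEmbedding M n) (ψstar : Matrix (Fin n) (Fin n) ℂ →ₗ[ℝ] V) :
    Submodule ℝ (Matrix (Fin n) (Fin n) ℂ) where
  carrier := {y | y.IsHermitian ∧ E.φ (ψstar y) = y}
  add_mem' := fun ⟨hx, hPx⟩ ⟨hy, hPy⟩ => ⟨hx.add hy, by rw [map_add, map_add, hPx, hPy]⟩
  zero_mem' := ⟨isHermitian_zero, by rw [map_zero, map_zero]⟩
  smul_mem' r _ := fun ⟨hx, hPx⟩ =>
    ⟨(IsSelfAdjoint.all r).smul hx, by rw [map_smul, map_smul, hPx]⟩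

section PsiStar

variable (E : QEmbedding M n) {ψstar : Matrix (Fin n) (Fin n) ℂ →ₗ[ℝ] V}
  (hψstar : ∀ (ω : Dual ℝ V) (b : Matrix (Fin n) (Fin n) ℂ), b.IsHermitian →
    ((ω (ψstar b) : ℝ) : ℂ) = (E.ψ ω * b).trace)
include hψstar

theorem psiStar_phi (e : V) : ψstar (E.φ e) = e := by
  refine sub_eq_zero.mp ((Module.forall_dual_apply_eq_zero_iff ℝ _).mp fun ω => ?_)
  have h := (hψstar ω _ (E.φ_herm e)).trans (E.pairing ω e)
  rw [map_sub, sub_eq_zero]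
  exact_mod_cast h

theorem psiStar_mem_pos {b : Matrix (Fin n) (Fin n) ℂ} (hb : b.PosSemidef) : ψstar b ∈ M.pos :=
  M.mem_pos_of_forall_dualPos fun ω hω => Complex.zero_le_real.mp <|
    hψstar ω b hb.isHermitian ▸ (E.ψ_pos ω hω).trace_mul_nonneg hb

theorem eq_zero_of_phi_psiStar_eq_zero (hmin : ∀ m < n, IsEmpty (QEmbedding M m))
    {c : Matrix (Fin n) (Fin n) ℂ} (hc : c.PosSemidef) (h : E.φ (ψstar c) = 0) : c = 0 := by
  have hψc : ψstar c = 0 := by rw [← psiStar_phi E hψstar (ψstar c), h, map_zero]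
  refine E.eq_zero_of_psi_mul_eq_zero hmin hc.isHermitian
    (E.psi_mul_eq_zero_of_trace_eq_zero hc fun ω => ?_)
  rw [← hψstar ω c hc.isHermitian, hψc, map_zero, Complex.ofReal_zero]

theorem phi_psiStar_mem_hermitianFixedPoints (b : Matrix (Fin n) (Fin n) ℂ) :
    E.φ (ψstar b) ∈ E.hermitianFixedPoints ψstar :=
  ⟨E.φ_herm _, by rw [psiStar_phi E hψstar]⟩

theorem one_mem_hermitianFixedPoints : 1 ∈ E.hermitianFixedPoints ψstar :=
  ⟨isHermitian_one, by rw [← E.φ_unit, psiStar_phi E hψstar]⟩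

theorem mul_self_mem_hermitianFixedPoints (hmin : ∀ m < n, IsEmpty (QEmbedding M m))
    {y : Matrix (Fin n) (Fin n) ℂ} (hy : y ∈ E.hermitianFixedPoints ψstar) :
    y * y ∈ E.hermitianFixedPoints ψstar := by
  obtain ⟨hyh, hPy⟩ := hy
  have hks := hyh.kadison_schwarz (E.φ ∘ₗ ψstar)
    (fun b hb => E.φ_pos _ (psiStar_mem_pos E hψstar hb))
    (one_mem_hermitianFixedPoints E hψstar).2
  simp only [LinearMap.comp_apply, hPy] at hks
  refine ⟨hyh.posSemidef_mul_self.isHermitian,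
    sub_eq_zero.mp (eq_zero_of_phi_psiStar_eq_zero E hψstar hmin hks ?_)⟩
  rw [map_sub, map_sub, psiStar_phi E hψstar, sub_self]

end PsiStar

end QEmbedding

/-- For a minimal embedding `(φ, ψ)` of a model `M` into `Q_n`, with
`ψ* : B → A` the dual map of `ψ` under the trace identification (characterized by
`ω(ψ*(b)) = tr(ψ(ω)·b)` for Hermitian `b`) and `P := φ ∘ ψ*`, the image under `P` of
the cone of positive-semidefinite matrices equals the set of squares of elements of
the range of `P`: `P(B₊) = {x² : x ∈ P(B)}`. -/
theorem minimal_embedding_cone_of_squares {V : Type} [NormedAddCommGroup V]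
    [NormedSpace ℝ V] [FiniteDimensional ℝ V] (M : ProbModel V) (n : ℕ)
    (E : QEmbedding M n)
    (hmin : ∀ m < n, IsEmpty (QEmbedding M m))
    (ψstar : Matrix (Fin n) (Fin n) ℂ →ₗ[ℝ] V)
    (hψstar : ∀ (ω : Dual ℝ V) (b : Matrix (Fin n) (Fin n) ℂ), b.IsHermitian →
      ((ω (ψstar b) : ℝ) : ℂ) = (E.ψ ω * b).trace) :
    (fun b => E.φ (ψstar b)) '' {b : Matrix (Fin n) (Fin n) ℂ | b.PosSemidef}
      = (fun x => x * x) ''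
          ((fun b => E.φ (ψstar b)) ''
            {y : Matrix (Fin n) (Fin n) ℂ | y.IsHermitian}) := by
  have hsq : ∀ y ∈ E.hermitianFixedPoints ψstar, y * y ∈ E.hermitianFixedPoints ψstar :=
    fun _ => E.mul_self_mem_hermitianFixedPoints hψstar hmin
  ext y
  constructor
  · rintro ⟨b, hb, rfl⟩
    obtain ⟨q, hq⟩ := (E.φ_pos _ (E.psiStar_mem_pos hψstar hb)).exists_aeval_mul_self_eq
    obtain ⟨hqh, hqP⟩ := aeval_mem_of_mul_self_mem (E.one_mem_hermitianFixedPoints hψstar) hsq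
      (E.phi_psiStar_mem_hermitianFixedPoints hψstar b) q
    exact ⟨_, ⟨_, hqh, hqP⟩, hq⟩
  · rintro ⟨_, ⟨b, -, rfl⟩, rfl⟩
    obtain ⟨-, hbP⟩ := hsq _ (E.phi_psiStar_mem_hermitianFixedPoints hψstar b)
    exact ⟨_, (E.φ_herm _).posSemidef_mul_self, hbP⟩
end

section
/- Let the gbit model be the probabilistic model with A = ℝ³, positive cone A₊ = {(s, a, b) ∈ ℝ³ : |a| + |b| ≤ s}, and unit effect u_A = (1, 0, 0); under the dot-product identification of A* with ℝ³, its dual cone is A₊* = {(t, x, y) : max(|x|, |y|) ≤ t}, whose normalized states form a square. Then for every n ∈ ℕ, there exists no embedding of the gbit model into the classical model C_n. -/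
/-!
Under an embedding into `C_n`, every state `ω` of the gbit becomes a probability vector `ψ ω` and
every effect `e` with `0 ≤ e ≤ u` a vector `φ e ∈ [0, 1]ⁿ`. Take a coordinate `i` in the support of
`ψ ω₁`, where `ω₁, ω₂, ω₃, ω₄` are the vertices `(1, ±1, ±1)` of the square of states, in cyclic
order. The effects `a = (½, ½, 0)` and `b = (½, 0, ½)` are certain in `ω₁`, so `φ a` and `φ b` equal
`1` at `i`; `b` is impossible in `ω₂` and `a` in `ω₄`, so `ψ ω₂` and `ψ ω₄` vanish at `i`. But
`ω₁ + ω₃ = ω₂ + ω₄`, so `ψ ω₁ i ≤ ψ ω₁ i + ψ ω₃ i = 0`: the square, unlike a simplex, admits two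
different decompositions of the same point into pure states.
-/

open Matrix

section DotProduct

variable {ι : Type*} [Fintype ι] {p f : ι → ℝ}

theorem eq_zero_or_eq_zero_of_dotProduct_eq_zero (hp : 0 ≤ p) (hf : 0 ≤ f) (h : p ⬝ᵥ f = 0)
    (i : ι) : p i = 0 ∨ f i = 0 :=
  mul_eq_zero.mp <| (Finset.sum_eq_zero_iff_of_nonneg fun j _ => mul_nonneg (hp j) (hf j)).mp h i
    (Finset.mem_univ i)

theorem eq_one_of_dotProduct_eq_dotProduct_one (hp : 0 ≤ p) (hf : f ≤ 1) (h : p ⬝ᵥ f = p ⬝ᵥ 1)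
    {i : ι} (hi : p i ≠ 0) : f i = 1 := by
  have hsub : p ⬝ᵥ (1 - f) = 0 := by rw [dotProduct_sub, h, sub_self]
  have := (eq_zero_or_eq_zero_of_dotProduct_eq_zero hp (sub_nonneg.mpr hf) hsub i).resolve_left hi
  exact (sub_eq_zero.mp this).symm

end DotProduct

/-- Let the gbit model be the probabilistic model with `A = ℝ³`,
positive cone `A₊ = {(s, a, b) : |a| + |b| ≤ s}` and unit effect `u_A = (1, 0, 0)`;
under the dot-product identification of `A*` with `ℝ³` its dual cone is
`A₊* = {(t, x, y) : max(|x|, |y|) ≤ t}`, whose normalized states form a square.  Then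
for every `n`, there is no embedding of the gbit model into the classical model `C_n`
(whose cone is the nonnegative orthant, whose unit effect is `(1, …, 1)`, and whose
dual is identified with `ℝⁿ` via the dot product). -/
theorem gbit_no_classical_embedding (n : ℕ) :
    ¬ ∃ φ ψ : (Fin 3 → ℝ) →ₗ[ℝ] (Fin n → ℝ),
      (∀ e : Fin 3 → ℝ, |e 1| + |e 2| ≤ e 0 → ∀ i, 0 ≤ φ e i)
      ∧ (∀ ω : Fin 3 → ℝ, max |ω 1| |ω 2| ≤ ω 0 → ∀ i, 0 ≤ ψ ω i)
      ∧ φ ![1, 0, 0] = (fun _ => 1)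
      ∧ (∀ ω e : Fin 3 → ℝ, ∑ i, ψ ω i * φ e i = ∑ j, ω j * e j) := by
  rintro ⟨φ, ψ, hφ, hψ, hu, hd⟩
  replace hu : φ ![1, 0, 0] = 1 := hu
  replace hd : ∀ ω e, ψ ω ⬝ᵥ φ e = ω ⬝ᵥ e := hd
  have hvertex : ∀ s t : ℝ, |s| = 1 → |t| = 1 → ∀ i, 0 ≤ ψ ![1, s, t] i := fun s t hs ht =>
    hψ _ (by simp [hs, ht])
  have hφ_le_one : ∀ e : Fin 3 → ℝ, |e 1| + |e 2| ≤ 1 - e 0 → φ e ≤ 1 := fun e he i => by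
    have := hφ (![1, 0, 0] - e) (by simpa using he) i
    rw [map_sub, hu] at this
    simpa using this
  have hψ₁ := hvertex 1 1 (by norm_num) (by norm_num)
  obtain ⟨i, hi⟩ : ∃ i, ψ ![1, 1, 1] i ≠ 0 := Function.ne_iff.mp fun h => by
    simpa [h] using hd ![1, 1, 1] ![1, 0, 0]
  have ha : φ ![1/2, 1/2, 0] i = 1 :=
    eq_one_of_dotProduct_eq_dotProduct_one hψ₁ (hφ_le_one _ (by norm_num [cons_val_two]))
      (by rw [← hu, hd, hd]; norm_num) hi
  have hb : φ ![1/2, 0, 1/2] i = 1 :=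
    eq_one_of_dotProduct_eq_dotProduct_one hψ₁ (hφ_le_one _ (by norm_num [cons_val_two]))
      (by rw [← hu, hd, hd]; norm_num) hi
  have hψ₂ : ψ ![1, 1, -1] i = 0 :=
    (eq_zero_or_eq_zero_of_dotProduct_eq_zero (hvertex 1 (-1) (by norm_num) (by norm_num))
      (hφ _ (by norm_num [cons_val_two])) (by rw [hd]; norm_num) i).resolve_right
      (hb.trans_ne one_ne_zero)
  have hψ₄ : ψ ![1, -1, 1] i = 0 :=
    (eq_zero_or_eq_zero_of_dotProduct_eq_zero (hvertex (-1) 1 (by norm_num) (by norm_num))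
      (hφ _ (by norm_num [cons_val_two])) (by rw [hd]; norm_num) i).resolve_right
      (ha.trans_ne one_ne_zero)
  have hsquare : ψ ![1, 1, 1] i + ψ ![1, -1, -1] i = ψ ![1, 1, -1] i + ψ ![1, -1, 1] i := by
    have hvertices : (![1, 1, 1] + ![1, -1, -1] : Fin 3 → ℝ) = ![1, 1, -1] + ![1, -1, 1] := by
      norm_num
    simpa only [map_add, Pi.add_apply] using congrFun (congrArg ψ hvertices) i
  have hψ₃ := hvertex (-1) (-1) (by norm_num) (by norm_num) i
  exact hi (le_antisymm (by linarith) (hψ₁ i))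
end

section
/- (Corollary: classical embeddings) Let (A, A₊, u_A) be a probabilistic model that can be embedded into the classical model C_n for some n ∈ ℕ. Then the model is itself classical: there exist m ∈ ℕ and a real-linear bijection T : A → ℝ^m such that T(A₊) equals the nonnegative orthant of ℝ^m and T(u_A) = (1, …, 1). -/
open Module

/-!
Dualising `ψ` gives a map `ρ : ℝⁿ → A` with `ρ ∘ φ = id`, and `ρ` is positive by the bipolar
theorem for the closed cone `A₊`. So `φ ∘ ρ` is an idempotent stochastic matrix `P`, and `A` is
a positive retract of `ℝⁿ` through it. Such a `P` is a Markov chain that reaches a recurrent class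
in one step and is then stationary: `P = E * N` with `N * E = 1`, where the rows of `N` are the
distinct rows of the recurrent states (probability vectors with disjoint supports) and the
columns of `E` are the absorption probabilities into them. Then `N ∘ φ : A → ℝᵐ` is a positive
isomorphism with positive inverse `ρ ∘ E`, sending `u_A` to `N 1 = 1`.
-/

open Finset

namespace Matrix

lemma mulVec_apply_nonneg {R κ ι : Type*} [Fintype ι] [Semiring R] [PartialOrder R]
    [IsOrderedRing R] {A : Matrix κ ι R} (hA : ∀ k i, 0 ≤ A k i) {x : ι → R}
    (hx : ∀ i, 0 ≤ x i) (k : κ) : 0 ≤ (A *ᵥ x) k :=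
  sum_nonneg fun i _ ↦ mul_nonneg (hA k i) (hx i)

variable {ι : Type*} [Fintype ι] {P : Matrix ι ι ℝ} {i j : ι}

noncomputable def rowSupport (P : Matrix ι ι ℝ) (i : ι) : Finset ι := {j | 0 < P i j}

@[simp]
lemma mem_rowSupport : j ∈ rowSupport P i ↔ 0 < P i j := by
  simp [rowSupport]

/-- For idempotent `P`, reaching `j` in one step is the same as reaching it at all, so this is the
usual notion of a recurrent state of the chain. -/
def IsRecurrent (P : Matrix ι ι ℝ) (i : ι) : Prop :=
  ∀ j ∈ rowSupport P i, i ∈ rowSupport P j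

open Classical in
noncomputable def recurrentStates (P : Matrix ι ι ℝ) : Finset ι := {i | IsRecurrent P i}

@[simp]
lemma mem_recurrentStates : i ∈ recurrentStates P ↔ IsRecurrent P i := by
  simp [recurrentStates]

/-- All states of a recurrent class have the same row (`IsRecurrent.row_eq`), so the classes are
indexed by these rows. -/
noncomputable def recurrentRows (P : Matrix ι ι ℝ) : Finset (ι → ℝ) :=
  (recurrentStates P).image P.row

noncomputable def absorptionProb (P : Matrix ι ι ℝ) (μ : ι → ℝ) (i : ι) : ℝ :=
  ∑ l ∈ recurrentStates P with P.row l = μ, P i l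

lemma mulVec_absorptionProb (hPP : P * P = P) (μ : ι → ℝ) :
    P *ᵥ absorptionProb P μ = absorptionProb P μ := by
  ext i
  simp only [absorptionProb, mulVec, dotProduct, mul_sum]
  rw [sum_comm]
  exact sum_congr rfl fun l _ ↦ by rw [← mul_apply, hPP]

section Stochastic

variable [DecidableEq ι] (hP : P ∈ rowStochastic ℝ ι)
include hP

lemma eq_zero_of_notMem_rowSupport (h : j ∉ rowSupport P i) : P i j = 0 :=
  le_antisymm (not_lt.1 (mem_rowSupport.not.1 h)) (nonneg_of_mem_rowStochastic hP)

lemma sum_rowSupport_mul (i : ι) (x : ι → ℝ) :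
    ∑ j ∈ rowSupport P i, P i j * x j = (P *ᵥ x) i :=
  sum_subset (subset_univ _) fun j _ hj ↦ by rw [eq_zero_of_notMem_rowSupport hP hj, zero_mul]

lemma sum_rowSupport (i : ι) : ∑ j ∈ rowSupport P i, P i j = 1 := by
  simpa [mulVec, dotProduct, sum_row_of_mem_rowStochastic hP] using sum_rowSupport_mul hP i 1

lemma rowSupport_nonempty (i : ι) : (rowSupport P i).Nonempty :=
  nonempty_of_sum_ne_zero (by rw [sum_rowSupport hP]; exact one_ne_zero)

lemma eq_on_rowSupport_of_mulVec_apply_eq {x : ι → ℝ} (hx : (P *ᵥ x) i = x i)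
    (hmax : ∀ j ∈ rowSupport P i, x j ≤ x i) : ∀ j ∈ rowSupport P i, x j = x i := by
  have hsum : ∑ j ∈ rowSupport P i, P i j * (x i - x j) = 0 := by
    simp only [mul_sub, sum_sub_distrib]
    rw [← sum_mul, sum_rowSupport hP, one_mul, sum_rowSupport_mul hP, hx, sub_self]
  intro j hj
  have := (sum_eq_zero_iff_of_nonneg fun k hk ↦
    mul_nonneg (mem_rowSupport.1 hk).le (sub_nonneg.2 (hmax k hk))).1 hsum j hj
  rcases mul_eq_zero.1 this with h | h
  · exact absurd h (mem_rowSupport.1 hj).ne'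
  · linarith

variable (hPP : P * P = P)
include hPP

lemma rowSupport_subset_of_mem (h : j ∈ rowSupport P i) : rowSupport P j ⊆ rowSupport P i := by
  intro k hk
  rw [mem_rowSupport] at *
  calc 0 < P i j * P j k := mul_pos h hk
    _ ≤ ∑ l, P i l * P l k :=
      single_le_sum (f := fun l ↦ P i l * P l k) (fun l _ ↦ mul_nonneg
        (nonneg_of_mem_rowStochastic hP) (nonneg_of_mem_rowStochastic hP)) (mem_univ j)
    _ = P i k := by rw [← mul_apply, hPP]

lemma IsRecurrent.rowSupport_eq (hi : IsRecurrent P i) (hj : j ∈ rowSupport P i) :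
    rowSupport P j = rowSupport P i :=
  (rowSupport_subset_of_mem hP hPP hj).antisymm (rowSupport_subset_of_mem hP hPP (hi j hj))

lemma IsRecurrent.mem_rowSupport_self (hi : IsRecurrent P i) : i ∈ rowSupport P i := by
  obtain ⟨j, hj⟩ := rowSupport_nonempty hP i
  exact rowSupport_subset_of_mem hP hPP hj (hi j hj)

lemma IsRecurrent.of_mem_rowSupport (hi : IsRecurrent P i) (hj : j ∈ rowSupport P i) :
    IsRecurrent P j := by
  intro k hk
  rw [hi.rowSupport_eq hP hPP hj] at hk
  rw [hi.rowSupport_eq hP hPP hk]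
  exact hj

lemma exists_isRecurrent_mem_rowSupport (i : ι) : ∃ j ∈ rowSupport P i, IsRecurrent P j := by
  obtain ⟨j, hj, hmin⟩ := exists_min_image _ (fun j ↦ #(rowSupport P j)) (rowSupport_nonempty hP i)
  have hclosed : ∀ k ∈ rowSupport P j, rowSupport P k = rowSupport P j := fun k hk ↦
    eq_of_subset_of_card_le (rowSupport_subset_of_mem hP hPP hk)
      (hmin k (rowSupport_subset_of_mem hP hPP hj hk))
  obtain ⟨k, hk⟩ := rowSupport_nonempty hP j
  refine ⟨k, rowSupport_subset_of_mem hP hPP hj hk, fun l hl ↦ ?_⟩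
  rw [hclosed k hk] at hl
  rw [hclosed l hl]
  exact hk

/-- Each column `P.col k` is fixed by `P`, so it is constant on a recurrent class by the maximum
principle applied at its largest value there. -/
lemma IsRecurrent.row_eq (hi : IsRecurrent P i) (hj : j ∈ rowSupport P i) :
    P.row j = P.row i := by
  ext k
  have hcol : P *ᵥ P.col k = P.col k := by
    rw [← mulVec_single_one, mulVec_mulVec, hPP]
  have hii := hi.mem_rowSupport_self hP hPP
  obtain ⟨i₀, hi₀, hmax⟩ := exists_max_image (rowSupport P i) (P.col k) ⟨i, hii⟩
  have hsupp := hi.rowSupport_eq hP hPP hi₀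
  have hconst := eq_on_rowSupport_of_mulVec_apply_eq hP (congrFun hcol i₀) (hsupp ▸ hmax)
  rw [hsupp] at hconst
  exact (hconst j hj).trans (hconst i hii).symm

lemma exists_isRecurrent_le_of_mulVec_eq {x : ι → ℝ} (hx : P *ᵥ x = x) (i : ι) :
    ∃ j, IsRecurrent P j ∧ x j ≤ x i := by
  obtain ⟨i₀, -, hmin⟩ := exists_min_image univ x ⟨i, mem_univ i⟩
  obtain ⟨j, hj, hrec⟩ := exists_isRecurrent_mem_rowSupport hP hPP i₀
  have hneg := eq_on_rowSupport_of_mulVec_apply_eq hP (x := -x) (by rw [mulVec_neg, hx])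
    (fun l _ ↦ neg_le_neg (hmin l (mem_univ l))) j hj
  exact ⟨j, hrec, (neg_inj.1 hneg).trans_le (hmin i (mem_univ i))⟩

/-- The mass `x i` that row `i` puts on the recurrent states is fixed by `P`, at most `1`, and
equal to `1` on recurrent states; by the minimum principle it is `1` everywhere. -/
lemma sum_recurrentStates (i : ι) : ∑ l ∈ recurrentStates P, P i l = 1 := by
  set x : ι → ℝ := fun i ↦ ∑ l ∈ recurrentStates P, P i l
  have hx : P *ᵥ x = x := by
    ext i
    simp only [x, mulVec, dotProduct, mul_sum]
    rw [sum_comm]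
    exact sum_congr rfl fun l _ ↦ by rw [← mul_apply, hPP]
  have hle : ∀ i, x i ≤ 1 := fun i ↦ (sum_row_of_mem_rowStochastic hP i) ▸
    sum_le_sum_of_subset_of_nonneg (subset_univ _) fun _ _ _ ↦ nonneg_of_mem_rowStochastic hP
  have hone : ∀ j, IsRecurrent P j → x j = 1 := fun j hj ↦ (hle j).antisymm <|
    sum_rowSupport hP j ▸ sum_le_sum_of_subset_of_nonneg
      (fun l hl ↦ mem_recurrentStates.2 (hj.of_mem_rowSupport hP hPP hl))
      fun _ _ _ ↦ nonneg_of_mem_rowStochastic hP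
  obtain ⟨j, hj, hji⟩ := exists_isRecurrent_le_of_mulVec_eq hP hPP hx i
  exact (hle i).antisymm (hone j hj ▸ hji)

lemma isRecurrent_of_mem_rowSupport (hj : j ∈ rowSupport P i) : IsRecurrent P j := by
  by_contra h
  have := sum_lt_sum_of_subset (subset_univ (recurrentStates P)) (mem_univ j)
    (mt mem_recurrentStates.1 h) (mem_rowSupport.1 hj)
    fun _ _ _ ↦ nonneg_of_mem_rowStochastic hP
  rw [sum_recurrentStates hP hPP, sum_row_of_mem_rowStochastic hP] at this
  exact this.ne rfl

lemma IsRecurrent.pos_iff {l : ι} (hi : IsRecurrent P i) :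
    0 < P i l ↔ IsRecurrent P l ∧ P.row l = P.row i := by
  refine ⟨fun h ↦ ⟨isRecurrent_of_mem_rowSupport hP hPP (mem_rowSupport.2 h),
    hi.row_eq hP hPP (mem_rowSupport.2 h)⟩, fun ⟨hl, hrow⟩ ↦ ?_⟩
  calc 0 < P l l := mem_rowSupport.1 (hl.mem_rowSupport_self hP hPP)
    _ = P i l := congrFun hrow l

lemma absorptionProb_apply_of_isRecurrent {r : ι} (hr : IsRecurrent P r) (μ : ι → ℝ) :
    absorptionProb P μ r = if P.row r = μ then 1 else 0 := by
  unfold absorptionProb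
  split_ifs with h
  · rw [← h, ← sum_rowSupport hP r]
    congr 1
    ext l
    simp [hr.pos_iff hP hPP]
  · refine sum_eq_zero fun l hl ↦ eq_zero_of_notMem_rowSupport hP fun hpos ↦ h ?_
    rw [mem_filter] at hl
    rw [← ((hr.pos_iff hP hPP).1 (mem_rowSupport.1 hpos)).2, hl.2]

lemma dotProduct_absorptionProb {μ : ι → ℝ} (hμ : μ ∈ recurrentRows P) (μ' : ι → ℝ) :
    μ ⬝ᵥ absorptionProb P μ' = if μ = μ' then 1 else 0 := by
  obtain ⟨r, hr, rfl⟩ := mem_image.1 hμ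
  change (P *ᵥ absorptionProb P μ') r = _
  rw [mulVec_absorptionProb hPP, absorptionProb_apply_of_isRecurrent hP hPP
    (mem_recurrentStates.1 hr)]

lemma eq_sum_absorptionProb_mul (i j : ι) :
    P i j = ∑ μ ∈ recurrentRows P, absorptionProb P μ i * μ j := by
  calc P i j = ∑ l, P i l * P l j := by rw [← mul_apply, hPP]
    _ = ∑ l ∈ recurrentStates P, P i l * P l j := by
      refine (sum_subset (subset_univ _) fun l _ hl ↦ ?_).symm
      rw [eq_zero_of_notMem_rowSupport hP fun h ↦
        hl (mem_recurrentStates.2 (isRecurrent_of_mem_rowSupport hP hPP h)), zero_mul]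
    _ = ∑ μ ∈ recurrentRows P, ∑ l ∈ recurrentStates P with P.row l = μ, P i l * P l j :=
      (sum_fiberwise_of_maps_to (t := recurrentRows P) (g := P.row)
        (fun l hl ↦ mem_image_of_mem P.row hl) (fun l ↦ P i l * P l j)).symm
    _ = ∑ μ ∈ recurrentRows P, absorptionProb P μ i * μ j := by
      refine sum_congr rfl fun μ _ ↦ ?_
      rw [absorptionProb, sum_mul]
      exact sum_congr rfl fun l hl ↦ by rw [← (mem_filter.1 hl).2, row_apply']

theorem exists_mul_eq_of_mul_self_eq :
    ∃ (m : ℕ) (N : Matrix (Fin m) ι ℝ) (E : Matrix ι (Fin m) ℝ),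
      (∀ k i, 0 ≤ N k i) ∧ (∀ i k, 0 ≤ E i k) ∧ N *ᵥ 1 = 1 ∧ N * E = 1 ∧ E * N = P := by
  let e := (recurrentRows P).equivFin.symm
  have hrow : ∀ k, ∃ r, P.row r = e k := fun k ↦
    let ⟨r, _, hr⟩ := mem_image.1 (e k).2; ⟨r, hr⟩
  refine ⟨_, of fun k j ↦ (e k : ι → ℝ) j, of fun i k ↦ absorptionProb P (e k) i,
    fun k j ↦ ?_, fun i k ↦ sum_nonneg fun _ _ ↦ nonneg_of_mem_rowStochastic hP, ?_, ?_, ?_⟩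
  · obtain ⟨r, hr⟩ := hrow k
    rw [of_apply, ← hr]
    exact nonneg_of_mem_rowStochastic hP
  · ext k
    obtain ⟨r, hr⟩ := hrow k
    simp [mulVec, dotProduct, ← hr, sum_row_of_mem_rowStochastic hP]
  · ext k k'
    have h := dotProduct_absorptionProb hP hPP (e k).2 (e k')
    simp only [← Subtype.ext_iff, e.injective.eq_iff] at h
    simpa [mul_apply, one_apply, dotProduct] using h
  · ext i j
    rw [mul_apply, eq_sum_absorptionProb_mul hP hPP i j]
    exact (e.sum_comp fun μ ↦ absorptionProb P μ i * (μ : ι → ℝ) j).trans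
      (sum_coe_sort (recurrentRows P) fun μ ↦ absorptionProb P μ i * μ j)

end Stochastic

end Matrix

open Matrix in
theorem exists_linearEquiv_pi_of_retract {V : Type*} [AddCommGroup V] [Module ℝ V] {ι : Type*}
    [Fintype ι] [DecidableEq ι] {K : Set V} {u : V} (φ : V →ₗ[ℝ] ι → ℝ)
    (ρ : (ι → ℝ) →ₗ[ℝ] V) (hρφ : ρ ∘ₗ φ = LinearMap.id) (hφ : ∀ v ∈ K, ∀ i, 0 ≤ φ v i)
    (hρ : ∀ x : ι → ℝ, (∀ i, 0 ≤ x i) → ρ x ∈ K) (hu : φ u = 1) :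
    ∃ (m : ℕ) (T : V ≃ₗ[ℝ] (Fin m → ℝ)), T '' K = {t | ∀ k, 0 ≤ t k} ∧ T u = 1 := by
  set P := LinearMap.toMatrix' (φ ∘ₗ ρ)
  have hPφρ : toLin' P = φ ∘ₗ ρ := toLin'_toMatrix' _
  have hPP : P * P = P := toLin'.injective <| by
    rw [toLin'_mul, hPφρ, LinearMap.comp_assoc, ← LinearMap.comp_assoc ρ, hρφ, LinearMap.id_comp]
  have hP : P ∈ rowStochastic ℝ ι := by
    refine ⟨fun i j ↦ hφ _ (hρ (Pi.single j 1) fun k ↦ ?_) i, ?_⟩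
    · exact (Pi.single_nonneg.2 zero_le_one : (0 : ι → ℝ) ≤ Pi.single j 1) k
    · rw [← toLin'_apply, hPφρ, LinearMap.comp_apply, ← hu, ← LinearMap.comp_apply ρ, hρφ,
        LinearMap.id_apply]
  obtain ⟨m, N, E, hN, hE, hN1, hNE, hEN⟩ := exists_mul_eq_of_mul_self_eq hP hPP
  have hTS : (toLin' N ∘ₗ φ) ∘ₗ (ρ ∘ₗ toLin' E) = LinearMap.id :=
    calc (toLin' N ∘ₗ φ) ∘ₗ (ρ ∘ₗ toLin' E) = toLin' (N * (E * N) * E) := by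
          rw [hEN, toLin'_mul, toLin'_mul, hPφρ]
          simp only [LinearMap.comp_assoc]
      _ = LinearMap.id := by rw [← Matrix.mul_assoc, hNE, Matrix.one_mul, hNE, toLin'_one]
  have hST : (ρ ∘ₗ toLin' E) ∘ₗ (toLin' N ∘ₗ φ) = LinearMap.id :=
    calc (ρ ∘ₗ toLin' E) ∘ₗ (toLin' N ∘ₗ φ) = ρ ∘ₗ toLin' (E * N) ∘ₗ φ := by
          simp only [toLin'_mul, LinearMap.comp_assoc]
      _ = (ρ ∘ₗ φ) ∘ₗ (ρ ∘ₗ φ) := by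
          rw [hEN, hPφρ]
          simp only [LinearMap.comp_assoc]
      _ = LinearMap.id := by rw [hρφ, LinearMap.id_comp]
  refine ⟨m, .ofLinearMap _ _ hTS hST, Set.Subset.antisymm ?_ fun t ht ↦ ?_, ?_⟩
  · rintro _ ⟨v, hv, rfl⟩
    exact mulVec_apply_nonneg hN (hφ v hv)
  · exact ⟨(ρ ∘ₗ toLin' E) t, hρ _ (mulVec_apply_nonneg hE ht), LinearMap.congr_fun hTS t⟩
  · change N *ᵥ φ u = 1
    rw [hu, hN1]

section ProbModel

variable {V : Type} [NormedAddCommGroup V] [NormedSpace ℝ V] [FiniteDimensional ℝ V]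

def ProbModel.toProperCone_s16 (M : ProbModel V) : ProperCone ℝ V where
  carrier := M.pos
  add_mem' hx hy := M.add_mem _ hx _ hy
  zero_mem' := by simpa using M.smul_mem 0 le_rfl _ M.unit_mem
  smul_mem' c x hx := M.smul_mem c c.2 x hx
  isClosed' := M.closed

lemma ProbModel.mem_pos_of_forall_dualPos_s16 (M : ProbModel V) {v : V}
    (hv : ∀ ω ∈ M.dualPos, 0 ≤ ω v) : v ∈ M.pos := by
  by_contra h
  obtain ⟨f, hf, hfv⟩ := M.toProperCone_s16.hyperplane_separation_point (x₀ := v) h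
  exact (hv f fun e he ↦ hf e he).not_gt hfv

end ProbModel

/-- **Corollary: classical embeddings.** If a probabilistic model
`(A, A₊, u_A)` can be embedded into the classical model `C_n` for some `n` (cone the
nonnegative orthant, unit effect `(1, …, 1)`, dual identified with `ℝⁿ` via the dot
product), then the model is itself classical: there are `m ∈ ℕ` and a real-linear
bijection `T : A → ℝ^m` with `T(A₊)` the nonnegative orthant and `T(u_A) = (1, …, 1)`. -/
theorem classical_embeddable_is_classical {V : Type} [NormedAddCommGroup V]
    [NormedSpace ℝ V] [FiniteDimensional ℝ V] (M : ProbModel V) (n : ℕ)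
    (φ : V →ₗ[ℝ] (Fin n → ℝ)) (ψ : Dual ℝ V →ₗ[ℝ] (Fin n → ℝ))
    (hφ : ∀ a ∈ M.pos, ∀ i, 0 ≤ φ a i)
    (hψ : ∀ ω ∈ M.dualPos, ∀ i, 0 ≤ ψ ω i)
    (hu : φ M.unit = fun _ => 1)
    (hp : ∀ (ω : Dual ℝ V) (e : V), ∑ i, ψ ω i * φ e i = ω e) :
    ∃ (m : ℕ) (T : V ≃ₗ[ℝ] (Fin m → ℝ)),
      T '' M.pos = {v : Fin m → ℝ | ∀ i, 0 ≤ v i}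
      ∧ T M.unit = fun _ => 1 := by
  let ρ : (Fin n → ℝ) →ₗ[ℝ] V := (evalEquiv ℝ V).symm.toLinearMap ∘ₗ ψ.dualMap ∘ₗ
    (dotProductEquiv ℝ (Fin n)).toLinearMap
  have hρ : ∀ ω x, ω (ρ x) = ∑ i, ψ ω i * x i := by
    intro ω x
    simp [ρ, dotProduct, mul_comm]
  refine exists_linearEquiv_pi_of_retract φ ρ ?_ hφ (fun x hx ↦ ?_) hu
  · refine LinearMap.ext fun e ↦ (evalEquiv ℝ V).injective ?_
    ext ω
    simp [hρ, hp]
  · refine M.mem_pos_of_forall_dualPos_s16 fun ω hω ↦ ?_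
    rw [hρ]
    exact sum_nonneg fun i _ ↦ mul_nonneg (hψ ω hω i) (hx i)
end

section
/- If a probabilistic model (A, A₊, u_A) can be embedded into the classical model C_n for some n, then A₊ is a polyhedral cone: there exist finitely many linear functionals f₁, …, f_k ∈ A* such that A₊ = {a ∈ A : fᵢ(a) ≥ 0 for all i = 1, …, k}. -/
open Module

/-- If a probabilistic model `(A, A₊, u_A)` can be embedded into the
classical model `C_n` for some `n` (cone the nonnegative orthant, unit effect
`(1, …, 1)`, dual identified with `ℝⁿ` via the dot product), then `A₊` is a polyhedral
cone: there are finitely many linear functionals `f₁, …, f_k ∈ A*` with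
`A₊ = {a ∈ A : fᵢ(a) ≥ 0 for all i}`. -/
theorem classical_embeddable_polyhedral {V : Type} [NormedAddCommGroup V]
    [NormedSpace ℝ V] [FiniteDimensional ℝ V] (M : ProbModel V) (n : ℕ)
    (φ : V →ₗ[ℝ] (Fin n → ℝ)) (ψ : Dual ℝ V →ₗ[ℝ] (Fin n → ℝ))
    (hφ : ∀ a ∈ M.pos, ∀ i, 0 ≤ φ a i)
    (hψ : ∀ ω ∈ M.dualPos, ∀ i, 0 ≤ ψ ω i)
    (hu : φ M.unit = fun _ => 1)
    (hp : ∀ (ω : Dual ℝ V) (e : V), ∑ i, ψ ω i * φ e i = ω e) :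
    ∃ (k : ℕ) (f : Fin k → Dual ℝ V),
      M.pos = {a : V | ∀ i, 0 ≤ f i a} := by
  refine ⟨n, fun i => (LinearMap.proj i).comp φ, ?_⟩
  ext a
  simp only [Set.mem_setOf_eq, LinearMap.comp_apply, LinearMap.proj_apply]
  constructor
  · exact fun ha i => hφ a ha i
  · intro ha
    by_contra hnot
    have hzero : (0 : V) ∈ M.pos := by
      simpa using M.smul_mem 0 le_rfl M.unit M.unit_mem
    have hconv : Convex ℝ M.pos := by
      intro x hx y hy s t hs ht _
      exact M.add_mem _ (M.smul_mem s hs x hx) _ (M.smul_mem t ht y hy)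
    obtain ⟨g, u, hg1, hg2⟩ :=
      geometric_hahn_banach_closed_point hconv M.closed hnot
    have hu0 : 0 < u := by simpa using hg1 0 hzero
    -- g is nonpositive on the cone
    have hgle : ∀ e ∈ M.pos, g e ≤ 0 := by
      intro e he
      by_contra hge
      push_neg at hge
      have hc : (0 : ℝ) ≤ (u + 1) / g e := by positivity
      have := hg1 _ (M.smul_mem _ hc e he)
      rw [map_smul, smul_eq_mul, div_mul_cancel₀ _ (ne_of_gt hge)] at this
      linarith
    set ω : Dual ℝ V := -(g : V →L[ℝ] ℝ).toLinearMap with hω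
    have hωpos : ω ∈ M.dualPos := by
      intro e he
      simp only [hω, LinearMap.neg_apply, ContinuousLinearMap.coe_coe]
      linarith [hgle e he]
    have h1 : ω a = ∑ i, ψ ω i * φ a i := (hp ω a).symm
    have h2 : 0 ≤ ∑ i, ψ ω i * φ a i :=
      Finset.sum_nonneg fun i _ => mul_nonneg (hψ ω hωpos i) (ha i)
    have h3 : ω a < 0 := by
      simp only [hω, LinearMap.neg_apply, ContinuousLinearMap.coe_coe]
      linarith
    linarith [h1 ▸ h2]
end
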